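/- arXiv:1605.09296 — 5 statements merged into one kernel-verified Lean document; each statement's English description precedes it below -/
import Mathlib

section
/- Let q : ℝ → ℝ^d, φ : ℝ^d → ℝ^m, and f : ℝ^m → ℝ be C^∞, fix an integer k ≥ 1 and a time t ∈ ℝ, and define the clique values v_i(h) as below. Then the reversed finite-difference combination of the clique gradients converges to a kinematic quantity: lim_{h → 0⁺} Σ_{i=0}^{k} (σ_{k−i} / h^k) · ∇f(v_i(h)) = (−1)^k · (d/dt)^k [ ∇f(z^{(k)}(t)) ], where the derivative on the right is the k-th time derivative of the map t ↦ ∇f(z^{(k)}(t)). -/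
/-!
STATEMENT 1: For smooth `q : ℝ → ℝ^d`, `φ : ℝ^d → ℝ^m`, `f : ℝ^m → ℝ`, `k ≥ 1`, `t ∈ ℝ`,
with `z = φ ∘ q`, finite-difference coefficients `σ_j = (-1)^{k-j} C(k,j)`, and clique
values `v_i(h) = h^{-k} ∑_{j=0}^k σ_j z(t + (j - (k - i)) h)`, the reversed
finite-difference combination of clique gradients satisfies
`lim_{h→0⁺} ∑_{i=0}^k (σ_{k-i}/h^k) ∇f(v_i(h)) = (-1)^k (d/dt)^k [∇f(z^{(k)}(t))]`.
Here the gradient is represented componentwise: `(∇f(v))_a = Df(v)[e_a]`.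
-/

open Filter Set
open scoped ContDiff

/-- The gradient of `f : ℝ^m → ℝ` at `v`, represented componentwise via the
Fréchet derivative applied to coordinate directions. -/
noncomputable def grad {m : ℕ} (f : (Fin m → ℝ) → ℝ) (v : Fin m → ℝ) : Fin m → ℝ :=
  fun a => fderiv ℝ f v (Pi.single a 1)

section aux
variable {F : Type*} [NormedAddCommGroup F] [NormedSpace ℝ F]

lemma natle (n : ℕ) : ((n : ℕ) : WithTop ℕ∞) ≤ ∞ := by exact_mod_cast le_top
lemma natlt (n : ℕ) : ((n : ℕ) : WithTop ℕ∞) < ∞ := by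
  exact_mod_cast (lt_top_iff_ne_top.mpr (by simp) : (n:ℕ∞) < ⊤)
lemma onele : (1 : WithTop ℕ∞) ≤ ∞ := by exact_mod_cast le_top
lemma infp1 : (∞ : WithTop ℕ∞) + 1 ≤ ∞ := by exact_mod_cast le_top

lemma sm_shift {g : ℝ → F} (hg : ContDiff ℝ ∞ g) (a : ℝ) :
    ContDiff ℝ ∞ (fun s => g (s + a)) :=
  hg.comp (contDiff_id.add contDiff_const)

lemma sm_fwd {g : ℝ → F} (hg : ContDiff ℝ ∞ g) (h : ℝ) :
    ContDiff ℝ ∞ (fwdDiff h g) :=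
  (sm_shift hg h).sub hg

lemma sm_fwd_iter {g : ℝ → F} (hg : ContDiff ℝ ∞ g) (h : ℝ) (k : ℕ) :
    ContDiff ℝ ∞ ((fwdDiff h)^[k] g) := by
  induction k generalizing g with
  | zero => exact hg
  | succ k IH => rw [Function.iterate_succ_apply]; exact IH (sm_fwd hg h)

lemma iteratedDeriv_fwdDiff {g : ℝ → F} (hg : ContDiff ℝ ∞ g) (h : ℝ) (n : ℕ) :
    iteratedDeriv n (fwdDiff h g) = fwdDiff h (iteratedDeriv n g) := by
  funext s
  have e : fwdDiff h g = (fun x => g (x + h)) - g := rfl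
  rw [e, ← iteratedDerivWithin_univ,
    iteratedDerivWithin_sub (mem_univ s) uniqueDiffOn_univ
      ((sm_shift hg h).of_le (natle n)).contDiffWithinAt (hg.of_le (natle n)).contDiffWithinAt,
    iteratedDerivWithin_univ, iteratedDerivWithin_univ]
  simp only [iteratedDeriv_comp_add_const]
  rfl

lemma iteratedDeriv_fwdDiff_iter {g : ℝ → F} (hg : ContDiff ℝ ∞ g) (h : ℝ) (k n : ℕ) :
    iteratedDeriv n ((fwdDiff h)^[k] g) = (fwdDiff h)^[k] (iteratedDeriv n g) := by
  induction k generalizing g with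
  | zero => simp
  | succ k IH =>
    rw [Function.iterate_succ_apply, Function.iterate_succ_apply, IH (sm_fwd hg h),
      iteratedDeriv_fwdDiff hg h n]

lemma fwdDiff_iter_approx {h : ℝ} (hh : 0 ≤ h) (k : ℕ) :
    ∀ (g : ℝ → F), ContDiff ℝ ∞ g → ∀ (x : ℝ) (L : F) (C : ℝ),
      (∀ s ∈ Icc x (x + (k : ℝ) * h), ‖iteratedDeriv k g s - L‖ ≤ C) →
      ‖(fwdDiff h)^[k] g x - h ^ k • L‖ ≤ C * h ^ k := by
  induction k with
  | zero =>
    intro g hg x L C hC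
    simpa using hC x (by simp)
  | succ k IH =>
    intro g hg x L C hC
    rw [Function.iterate_succ_apply]
    have hmain : ∀ s ∈ Icc x (x + (k : ℝ) * h),
        ‖iteratedDeriv k (fwdDiff h g) s - h • L‖ ≤ C * h := by
      intro s hs
      obtain ⟨hs1, hs2⟩ := hs
      rw [iteratedDeriv_fwdDiff hg h k]
      have hder : ∀ u ∈ Icc s (s + h),
          HasDerivWithinAt (fun u => iteratedDeriv k g u - u • L)
            (iteratedDeriv (k + 1) g u - L) (Icc s (s + h)) u := by
        intro u _
        have hd : DifferentiableAt ℝ (iteratedDeriv k g) u :=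
          (hg.differentiable_iteratedDeriv k (natlt k)).differentiableAt
        have h1 : HasDerivAt (iteratedDeriv k g) (iteratedDeriv (k + 1) g u) u := by
          rw [iteratedDeriv_succ]; exact hd.hasDerivAt
        have h2 : HasDerivAt (fun u : ℝ => u • L) L u := by
          simpa using (hasDerivAt_id u).smul_const L
        exact (h1.sub h2).hasDerivWithinAt
      have hb : ∀ u ∈ Icc s (s + h), ‖iteratedDeriv (k + 1) g u - L‖ ≤ C := by
        intro u hu
        obtain ⟨hu1, hu2⟩ := hu
        refine hC u ⟨by linarith, ?_⟩
        push_cast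
        nlinarith [hh]
      have key := (convex_Icc s (s + h)).norm_image_sub_le_of_norm_hasDerivWithin_le hder hb
        (left_mem_Icc.2 (by linarith)) (right_mem_Icc.2 (by linarith))
      have e1 : (iteratedDeriv k g (s + h) - (s + h) • L) - (iteratedDeriv k g s - s • L)
          = fwdDiff h (iteratedDeriv k g) s - h • L := by
        show _ = iteratedDeriv k g (s + h) - iteratedDeriv k g s - h • L
        rw [add_smul]; abel
      rw [e1] at key
      calc ‖fwdDiff h (iteratedDeriv k g) s - h • L‖ ≤ C * ‖s + h - s‖ := key
        _ = C * h := by rw [show s + h - s = h by ring, Real.norm_eq_abs, abs_of_nonneg hh]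
    have IH' := IH (fwdDiff h g) (sm_fwd hg h) x (h • L) (C * h) hmain
    calc ‖(fwdDiff h)^[k] (fwdDiff h g) x - h ^ (k+1) • L‖
        = ‖(fwdDiff h)^[k] (fwdDiff h g) x - h ^ k • (h • L)‖ := by
          rw [smul_smul, ← pow_succ]
      _ ≤ (C * h) * h ^ k := IH'
      _ = C * h ^ (k+1) := by ring

lemma fwdDiff_iter_approx' {g : ℝ → F} (hg : ContDiff ℝ ∞ g) {h : ℝ} (hh : 0 < h)
    (k : ℕ) (x : ℝ) (L : F) (C : ℝ)
    (hC : ∀ s ∈ Icc x (x + (k : ℝ) * h), ‖iteratedDeriv k g s - L‖ ≤ C) :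
    ‖(h ^ k)⁻¹ • (fwdDiff h)^[k] g x - L‖ ≤ C := by
  have hpk : (0:ℝ) < h ^ k := pow_pos hh k
  have h1 := fwdDiff_iter_approx hh.le k g hg x L C hC
  have e : (h ^ k)⁻¹ • (fwdDiff h)^[k] g x - L
      = (h ^ k)⁻¹ • ((fwdDiff h)^[k] g x - h ^ k • L) := by
    rw [smul_sub, smul_smul, inv_mul_cancel₀ hpk.ne', one_smul]
  rw [e, norm_smul, Real.norm_eq_abs, abs_of_pos (inv_pos.2 hpk)]
  calc (h ^ k)⁻¹ * ‖(fwdDiff h)^[k] g x - h ^ k • L‖ ≤ (h ^ k)⁻¹ * (C * h ^ k) :=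
        mul_le_mul_of_nonneg_left h1 (inv_pos.2 hpk).le
    _ = C := by field_simp

lemma iteratedDeriv_prod {E₁ E₂ : Type*} [NormedAddCommGroup E₁] [NormedSpace ℝ E₁]
    [NormedAddCommGroup E₂] [NormedSpace ℝ E₂] {f : ℝ → E₁} {g : ℝ → E₂}
    (hf : ContDiff ℝ ∞ f) (hg : ContDiff ℝ ∞ g) (n : ℕ) :
    iteratedDeriv n (fun s => (f s, g s))
      = fun s => (iteratedDeriv n f s, iteratedDeriv n g s) := by
  induction n with
  | zero => simp [iteratedDeriv_zero]
  | succ n IH =>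
    funext s
    rw [iteratedDeriv_succ, IH, iteratedDeriv_succ, iteratedDeriv_succ]
    exact (((hf.differentiable_iteratedDeriv n (natlt n)).differentiableAt.hasDerivAt).prodMk
      ((hg.differentiable_iteratedDeriv n (natlt n)).differentiableAt.hasDerivAt)).deriv

lemma comp_unif (n : ℕ) :
    ∀ (E : Type) [NormedAddCommGroup E] [NormedSpace ℝ E] [FiniteDimensional ℝ E]
      (F' : Type) [NormedAddCommGroup F'] [NormedSpace ℝ F']
      (u : ℝ → ℝ → E) (w : ℝ → E) (Ψ : E → F')
      (_ : ∀ h, ContDiff ℝ ∞ (u h)) (_ : ContDiff ℝ ∞ w) (_ : ContDiff ℝ ∞ Ψ)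
      (K : Set ℝ) (_ : IsCompact K)
      (_ : ∀ j ≤ n, TendstoUniformlyOn (fun h s => iteratedDeriv j (u h) s)
          (iteratedDeriv j w) (nhdsWithin 0 (Ioi 0)) K)
      (j : ℕ) (_ : j ≤ n),
      TendstoUniformlyOn (fun h s => iteratedDeriv j (fun x => Ψ (u h x)) s)
        (iteratedDeriv j (fun x => Ψ (w x))) (nhdsWithin 0 (Ioi 0)) K := by
  induction n with
  | zero =>
    intro E _ _ _ F' _ _ u w Ψ hu hw hΨ K hK hconv j hj
    obtain rfl : j = 0 := Nat.le_zero.mp hj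
    simp only [iteratedDeriv_zero]
    haveI : ProperSpace E := FiniteDimensional.proper ℝ E
    have hKc : IsCompact (w '' K) := hK.image hw.continuous
    have hK1 : IsCompact (Metric.cthickening 1 (w '' K)) := hKc.cthickening
    have hUC : UniformContinuousOn Ψ (Metric.cthickening 1 (w '' K)) :=
      hK1.uniformContinuousOn_of_continuous hΨ.continuous.continuousOn
    rw [Metric.tendstoUniformlyOn_iff]
    intro ε hε
    obtain ⟨δ, hδ, hδ'⟩ := Metric.uniformContinuousOn_iff.mp hUC ε hε
    have h0 := hconv 0 le_rfl
    rw [Metric.tendstoUniformlyOn_iff] at h0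
    filter_upwards [h0 (min δ 1) (lt_min hδ one_pos)] with h hh s hs
    have h1 : dist (w s) (u h s) < min δ 1 := by
      simpa [iteratedDeriv_zero] using hh s hs
    have hw1 : w s ∈ Metric.cthickening 1 (w '' K) :=
      Metric.self_subset_cthickening _ ⟨s, hs, rfl⟩
    have hu1 : u h s ∈ Metric.cthickening 1 (w '' K) :=
      Metric.mem_cthickening_of_dist_le (u h s) (w s) 1 _ ⟨s, hs, rfl⟩
        (by rw [dist_comm]; exact h1.le.trans (min_le_right _ _))
    exact hδ' _ hw1 _ hu1 (h1.trans_le (min_le_left _ _))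
  | succ n IH =>
    intro E _ _ _ F' _ _ u w Ψ hu hw hΨ K hK hconv j hj
    rcases Nat.lt_or_ge j (n+1) with hj' | hj'
    · exact IH E F' u w Ψ hu hw hΨ K hK
        (fun j hj => hconv j (hj.trans (Nat.le_succ n))) j (Nat.lt_succ_iff.mp hj')
    · obtain rfl : j = n + 1 := le_antisymm hj hj'
      have hΨ₂ : ContDiff ℝ ∞ (fun p : E × E => fderiv ℝ Ψ p.1 p.2) :=
        ((hΨ.fderiv_right infp1).comp contDiff_fst).clm_apply contDiff_snd
      have hderu : ∀ h, ContDiff ℝ ∞ (deriv (u h)) :=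
        fun h => (contDiff_infty_iff_deriv.mp (hu h)).2
      have hderw : ContDiff ℝ ∞ (deriv w) := (contDiff_infty_iff_deriv.mp hw).2
      have hu₂ : ∀ h, ContDiff ℝ ∞ (fun s => (u h s, deriv (u h) s)) :=
        fun h => (hu h).prodMk (hderu h)
      have hw₂ : ContDiff ℝ ∞ (fun s => (w s, deriv w s)) := hw.prodMk hderw
      have hconv₂ : ∀ j ≤ n,
          TendstoUniformlyOn (fun h s => iteratedDeriv j (fun x => (u h x, deriv (u h) x)) s)
            (iteratedDeriv j (fun x => (w x, deriv w x))) (nhdsWithin 0 (Ioi 0)) K := by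
        intro j hjn
        rw [Metric.tendstoUniformlyOn_iff]
        intro ε hε
        have c1 := hconv j (hjn.trans (Nat.le_succ n))
        have c2 := hconv (j+1) (Nat.succ_le_succ hjn)
        rw [Metric.tendstoUniformlyOn_iff] at c1 c2
        filter_upwards [c1 ε hε, c2 ε hε] with h h1 h2 s hs
        rw [iteratedDeriv_prod (hu h) (hderu h) j, iteratedDeriv_prod hw hderw j,
          Prod.dist_eq]
        refine max_lt (h1 s hs) ?_
        have := h2 s hs
        simpa only [iteratedDeriv_succ'] using this
      have main := IH (E × E) F' (fun h s => (u h s, deriv (u h) s))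
        (fun s => (w s, deriv w s)) (fun p => fderiv ℝ Ψ p.1 p.2)
        hu₂ hw₂ hΨ₂ K hK hconv₂ n le_rfl
      have e3 : ∀ h : ℝ, (fun s => fderiv ℝ Ψ (u h s) (deriv (u h) s))
          = deriv (fun x => Ψ (u h x)) := by
        intro h; funext s
        exact (((hΨ.differentiable (by simp)).differentiableAt.hasFDerivAt).comp_hasDerivAt s
          (((hu h).differentiable (by simp)) s).hasDerivAt).deriv.symm
      have e4 : (fun s => fderiv ℝ Ψ (w s) (deriv w s)) = deriv (fun x => Ψ (w x)) := by
        funext s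
        exact (((hΨ.differentiable (by simp)).differentiableAt.hasFDerivAt).comp_hasDerivAt s
          ((hw.differentiable (by simp)) s).hasDerivAt).deriv.symm
      simp only [iteratedDeriv_succ']
      have e5 : (fun (h : ℝ) (s : ℝ) => iteratedDeriv n (deriv (fun x => Ψ (u h x))) s)
          = fun h s => iteratedDeriv n (fun x => fderiv ℝ Ψ (u h x) (deriv (u h) x)) s := by
        funext h s; rw [← e3 h]
      rw [e5, ← e4]
      exact main

end aux

theorem clique_gradient_sum_tendsto_kinematic_limit
    {d m : ℕ} (q : ℝ → (Fin d → ℝ)) (φ : (Fin d → ℝ) → (Fin m → ℝ))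
    (f : (Fin m → ℝ) → ℝ)
    (hq : ContDiff ℝ (⊤ : ℕ∞) q) (hφ : ContDiff ℝ (⊤ : ℕ∞) φ) (hf : ContDiff ℝ (⊤ : ℕ∞) f)
    (k : ℕ) (hk : 1 ≤ k) (t : ℝ)
    (z : ℝ → Fin m → ℝ) (hz : z = fun s => φ (q s))
    (σ : ℕ → ℝ) (hσ : ∀ j, σ j = (-1 : ℝ) ^ (k - j) * (k.choose j : ℝ))
    (v : ℕ → ℝ → Fin m → ℝ)
    (hv : ∀ i h, v i h =
      (h ^ k)⁻¹ •
        ∑ j ∈ Finset.range (k + 1), σ j • z (t + ((j : ℝ) - ((k : ℝ) - (i : ℝ))) * h)) :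
    Tendsto
      (fun h : ℝ => ∑ i ∈ Finset.range (k + 1), (σ (k - i) / h ^ k) • grad f (v i h))
      (nhdsWithin 0 (Ioi 0))
      (nhds ((-1 : ℝ) ^ k •
        iteratedDeriv k (fun s => grad f (iteratedDeriv k z s)) t)) := by
  have hk0 : (0:ℝ) ≤ (k:ℝ) := Nat.cast_nonneg k
  have hzsm : ContDiff ℝ ∞ z := by rw [hz]; exact (hφ.comp hq).of_le (by simp)
  have hG : ContDiff ℝ ∞ (grad f) :=
    contDiff_pi.mpr fun a => (hf.fderiv_right (by simp)).clm_apply contDiff_const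
  have hzj : ∀ j : ℕ, ContDiff ℝ ∞ (iteratedDeriv j z) := by
    intro j; rw [iteratedDeriv_eq_iterate]; exact hzsm.iterate_deriv j
  set W : ℝ → ℝ → (Fin m → ℝ) := fun h s => (h ^ k)⁻¹ • (fwdDiff h)^[k] z s with hWdef
  have hWsm : ∀ h, ContDiff ℝ ∞ (W h) := fun h => ContDiff.smul (f := fun _ => (h ^ k)⁻¹) contDiff_const (sm_fwd_iter hzsm h k)
  have hvW : ∀ (i : ℕ) (h : ℝ), v i h = W h (t - (k:ℝ) * h + (i:ℝ) * h) := by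
    intro i h
    rw [hv, hWdef]
    simp only
    congr 1
    rw [fwdDiff_iter_eq_sum_shift]
    refine Finset.sum_congr rfl fun j hj => ?_
    rw [← Int.cast_smul_eq_zsmul ℝ, hσ j]
    have harg : t + ((j:ℝ) - ((k:ℝ) - (i:ℝ))) * h = t - (k:ℝ)*h + (i:ℝ)*h + (j:ℕ) • h := by
      rw [nsmul_eq_mul]; ring
    rw [harg]
    norm_cast
  have hWder : ∀ (h : ℝ) (j : ℕ), iteratedDeriv j (W h)
      = fun s => (h ^ k)⁻¹ • (fwdDiff h)^[k] (iteratedDeriv j z) s := by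
    intro h j
    have e : W h = (h ^ k)⁻¹ • ((fwdDiff h)^[k] z) := rfl
    funext s
    rw [e, ← iteratedDerivWithin_univ,
      iteratedDerivWithin_const_smul (mem_univ s) uniqueDiffOn_univ _
        ((sm_fwd_iter hzsm h k).of_le (natle j)).contDiffWithinAt,
      iteratedDerivWithin_univ, iteratedDeriv_fwdDiff_iter hzsm h k j]
  have hswap : ∀ j : ℕ,
      iteratedDeriv j (iteratedDeriv k z) = iteratedDeriv k (iteratedDeriv j z) := by
    intro j
    simp only [iteratedDeriv_eq_iterate, ← Function.iterate_add_apply]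
    rw [Nat.add_comm]
  have hconvW : ∀ j ≤ k, TendstoUniformlyOn (fun h s => iteratedDeriv j (W h) s)
      (iteratedDeriv j (iteratedDeriv k z)) (nhdsWithin 0 (Ioi 0)) (Icc (t-1) (t+1)) := by
    intro j _
    have hD : ContDiff ℝ ∞ (iteratedDeriv k (iteratedDeriv j z)) := by
      rw [iteratedDeriv_eq_iterate]; exact (hzj j).iterate_deriv k
    rw [Metric.tendstoUniformlyOn_iff]
    intro ε hε
    obtain ⟨δ, hδpos, hδ⟩ := Metric.uniformContinuousOn_iff.mp
      ((isCompact_Icc (a := t-2) (b := t+2)).uniformContinuousOn_of_continuous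
        hD.continuous.continuousOn) (ε/2) (half_pos hε)
    have hr : (0:ℝ) < min (δ/(k+1)) (1/(k+1)) := lt_min (by positivity) (by positivity)
    filter_upwards [Ioo_mem_nhdsGT hr] with h hh s hs
    obtain ⟨h0, hrlt⟩ := hh
    obtain ⟨hsl, hsr⟩ := hs
    have hrl1 : h < 1/((k:ℝ)+1) := hrlt.trans_le (min_le_right _ _)
    have hrlδ : h < δ/((k:ℝ)+1) := hrlt.trans_le (min_le_left _ _)
    have hk1' : (0:ℝ) < (k:ℝ)+1 := by positivity
    have hd1 := (lt_div_iff₀ hk1').mp hrl1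
    have hd2 := (lt_div_iff₀ hk1').mp hrlδ
    have hkh1 : (k:ℝ) * h < 1 := by nlinarith
    have hkhδ : (k:ℝ) * h < δ := by nlinarith
    have hbound : ∀ u ∈ Icc s (s + (k:ℝ)*h),
        ‖iteratedDeriv k (iteratedDeriv j z) u
          - iteratedDeriv k (iteratedDeriv j z) s‖ ≤ ε/2 := by
      intro u hu
      obtain ⟨hu1, hu2⟩ := hu
      have hkh0 : 0 ≤ (k:ℝ)*h := by positivity
      have hd : dist u s < δ := by
        rw [Real.dist_eq, abs_of_nonneg (by linarith)]; linarith
      rw [← dist_eq_norm]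
      exact (hδ u ⟨by linarith, by linarith⟩ s ⟨by linarith, by linarith⟩ hd).le
    have key := fwdDiff_iter_approx' (hzj j) h0 k s
      (iteratedDeriv k (iteratedDeriv j z) s) (ε/2) hbound
    simp only [hWder h j, hswap j]
    rw [dist_eq_norm, norm_sub_rev]
    exact key.trans_lt (by linarith)
  have hzk : ContDiff ℝ ∞ (iteratedDeriv k z) := hzj k
  have hGW := comp_unif k (Fin m → ℝ) (Fin m → ℝ) W (iteratedDeriv k z) (grad f)
      hWsm hzk hG (Icc (t-1) (t+1)) isCompact_Icc hconvW k le_rfl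
  have hΦ : ContDiff ℝ ∞ (fun s => grad f (iteratedDeriv k z s)) := hG.comp hzk
  have hΦk : Continuous (iteratedDeriv k (fun s => grad f (iteratedDeriv k z s))) := by
    have h1 : ContDiff ℝ ∞ (iteratedDeriv k (fun s => grad f (iteratedDeriv k z s))) := by
      rw [iteratedDeriv_eq_iterate]; exact hΦ.iterate_deriv k
    exact h1.continuous
  set L0 := iteratedDeriv k (fun s => grad f (iteratedDeriv k z s)) t with hL0
  have hsum : ∀ h : ℝ,
      (∑ i ∈ Finset.range (k + 1), (σ (k - i) / h ^ k) • grad f (v i h))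
        = ((-1:ℝ)^k) • ((h ^ k)⁻¹ •
            (fwdDiff h)^[k] (fun s => grad f (W h s)) (t - (k:ℝ) * h)) := by
    intro h
    rw [fwdDiff_iter_eq_sum_shift, Finset.smul_sum, Finset.smul_sum]
    refine Finset.sum_congr rfl fun i hi => ?_
    have hik : i ≤ k := Nat.lt_succ_iff.mp (Finset.mem_range.mp hi)
    rw [← Int.cast_smul_eq_zsmul ℝ, hvW i h]
    have harg : t - (k:ℝ)*h + (i:ℝ)*h = (t - (k:ℝ)*h) + (i:ℕ) • h := by
      rw [nsmul_eq_mul]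
    rw [harg, smul_smul, smul_smul]
    congr 1
    rw [hσ (k - i), Nat.sub_sub_self hik, Nat.choose_symm hik]
    have hsq : (-1:ℝ)^(k-i) * (-1:ℝ)^(k-i) = 1 := by
      rw [← pow_add]; exact Even.neg_one_pow ⟨k - i, rfl⟩
    have hrw : (-1:ℝ)^k = (-1:ℝ)^(k-i) * (-1:ℝ)^i := by
      rw [← pow_add, Nat.sub_add_cancel hik]
    push_cast
    rw [hrw]
    linear_combination (-((-1:ℝ)^i * ((k.choose i : ℕ):ℝ) * ((h:ℝ)^k)⁻¹)) * hsq
  have hS : Tendsto (fun h : ℝ => (h ^ k)⁻¹ •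
      (fwdDiff h)^[k] (fun s => grad f (W h s)) (t - (k:ℝ) * h))
      (nhdsWithin 0 (Ioi 0)) (nhds L0) := by
    rw [Metric.tendsto_nhds]
    intro ε hε
    obtain ⟨δ, hδpos, hδ⟩ := Metric.continuous_iff.mp hΦk t (ε/4) (by positivity)
    have huc := Metric.tendstoUniformlyOn_iff.mp hGW (ε/4) (by positivity)
    have hr : (0:ℝ) < min (δ/(k+1)) (1/(k+1)) := lt_min (by positivity) (by positivity)
    filter_upwards [huc, Ioo_mem_nhdsGT hr] with h hh1 hh2
    obtain ⟨h0, hrlt⟩ := hh2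
    have hrl1 : h < 1/((k:ℝ)+1) := hrlt.trans_le (min_le_right _ _)
    have hrlδ : h < δ/((k:ℝ)+1) := hrlt.trans_le (min_le_left _ _)
    have hk1' : (0:ℝ) < (k:ℝ)+1 := by positivity
    have hd1 := (lt_div_iff₀ hk1').mp hrl1
    have hd2 := (lt_div_iff₀ hk1').mp hrlδ
    have hkh1 : (k:ℝ) * h < 1 := by nlinarith
    have hkhδ : (k:ℝ) * h < δ := by nlinarith
    have hkh0 : 0 ≤ (k:ℝ)*h := by positivity
    have hbound : ∀ s ∈ Icc (t - (k:ℝ)*h) (t - (k:ℝ)*h + (k:ℝ)*h),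
        ‖iteratedDeriv k (fun x => grad f (W h x)) s - L0‖ ≤ ε/4 + ε/4 := by
      intro s hs
      obtain ⟨hs1, hs2⟩ := hs
      have hs2' : s ≤ t := by linarith
      have h1 := hh1 s ⟨by linarith, by linarith⟩
      have h2 : dist s t < δ := by
        rw [Real.dist_eq, abs_of_nonpos (by linarith)]; linarith
      have h3 := hδ s h2
      calc ‖iteratedDeriv k (fun x => grad f (W h x)) s - L0‖
          = dist (iteratedDeriv k (fun x => grad f (W h x)) s) L0 := (dist_eq_norm _ _).symm
        _ ≤ dist (iteratedDeriv k (fun x => grad f (W h x)) s)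
              (iteratedDeriv k (fun s => grad f (iteratedDeriv k z s)) s)
            + dist (iteratedDeriv k (fun s => grad f (iteratedDeriv k z s)) s) L0 :=
              dist_triangle _ _ _
        _ ≤ ε/4 + ε/4 := add_le_add (by rw [dist_comm]; exact h1.le) h3.le
    have happly := fwdDiff_iter_approx' (hG.comp (hWsm h)) h0 k (t - (k:ℝ)*h) L0
      (ε/4 + ε/4) hbound
    rw [dist_eq_norm]
    exact happly.trans_lt (by linarith)
  exact (hS.const_smul ((-1:ℝ)^k)).congr fun h => (hsum h).symm
end

section
/- Let q : ℝ → ℝ^d, φ : ℝ^d → ℝ^m, and f : ℝ^m → ℝ be C^∞, fix an integer k ≥ 1 and a time t ∈ ℝ, and define H(h), H_GN(h) as below. Then the scaled Gauss-Newton Hessian block converges to a finite limit: lim_{h → 0⁺} h^{2k} · H_GN(h) = binom(2k, k) · Jᵀ ∇²f(z^{(k)}(t)) J, and the scaled true Hessian block h^{2k} · H(h) converges to the same limit. -/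
/-!
STATEMENT 3: With the setup of the context, the scaled Gauss-Newton Hessian block
converges: `lim_{h→0⁺} h^{2k} H_GN(h) = C(2k,k) · Jᵀ ∇²f(z^{(k)}(t)) J`, and the
scaled true Hessian block `h^{2k} H(h)` converges to the same limit.
-/

open Filter Set Matrix

/-- Hessian matrix of `f : ℝ^m → ℝ` at `v`. -/
noncomputable def hess {m : ℕ} (f : (Fin m → ℝ) → ℝ) (v : Fin m → ℝ) :
    Matrix (Fin m) (Fin m) ℝ :=
  Matrix.of fun a b => fderiv ℝ (fun x => fderiv ℝ f x (Pi.single b 1)) v (Pi.single a 1)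

/-- Jacobian matrix of `φ : ℝ^d → ℝ^m` at `x`. -/
noncomputable def jac {d m : ℕ} (φ : (Fin d → ℝ) → (Fin m → ℝ)) (x : Fin d → ℝ) :
    Matrix (Fin m) (Fin d) ℝ :=
  Matrix.of fun a p => fderiv ℝ φ x (Pi.single p 1) a

/-- Contraction `D²φ(x) · w = ∑_α w_α ∇²φ_α(x)` of the second derivative of
`φ : ℝ^d → ℝ^m` with a vector `w ∈ ℝ^m`. -/
noncomputable def d2Contract {d m : ℕ} (φ : (Fin d → ℝ) → (Fin m → ℝ)) (x : Fin d → ℝ)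
    (w : Fin m → ℝ) : Matrix (Fin d) (Fin d) ℝ :=
  ∑ a : Fin m, w a • hess (fun y => φ y a) x

/-- Frobenius norm of a square matrix. -/
noncomputable def frob {d : ℕ} (A : Matrix (Fin d) (Fin d) ℝ) : ℝ :=
  Real.sqrt (∑ p : Fin d, ∑ r : Fin d, (A p r) ^ 2)

/-! ### Auxiliary lemmas -/

open fwdDiff ContDiff

section aux

variable {E : Type*} [NormedAddCommGroup E] [NormedSpace ℝ E]

lemma my_contDiff_fwdDiff (h : ℝ) {g : ℝ → E} (hg : ContDiff ℝ ∞ g) :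
    ContDiff ℝ ∞ (Δ_[h] g) := by
  have e : Δ_[h] g = fun x => g (x + h) - g x := rfl
  rw [e]; exact (hg.comp (contDiff_id.add contDiff_const)).sub hg

lemma my_contDiff_iteratedDeriv (n : ℕ) {g : ℝ → E} (hg : ContDiff ℝ ∞ g) :
    ContDiff ℝ ∞ (iteratedDeriv n g) := by
  rw [iteratedDeriv_eq_iterate]; exact hg.iterate_deriv n

lemma my_iteratedDeriv_fwdDiff (n : ℕ) (h : ℝ) {g : ℝ → E} (hg : ContDiff ℝ ∞ g) :
    iteratedDeriv n (Δ_[h] g) = Δ_[h] (iteratedDeriv n g) := by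
  induction n with
  | zero => simp [iteratedDeriv_zero]
  | succ n IH =>
    have hF : ContDiff ℝ ∞ (iteratedDeriv n g) := my_contDiff_iteratedDeriv n hg
    rw [iteratedDeriv_succ, IH, iteratedDeriv_succ]
    funext x
    have e : Δ_[h] (iteratedDeriv n g)
        = fun y => iteratedDeriv n g (y + h) - iteratedDeriv n g y := rfl
    rw [e]
    have h1 : DifferentiableAt ℝ (fun y => iteratedDeriv n g (y + h)) x :=
      (hF.differentiable (by norm_num) (x + h)).comp x ((differentiable_id.add_const h) x)
    have h2 : DifferentiableAt ℝ (iteratedDeriv n g) x := hF.differentiable (by norm_num) x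
    rw [deriv_fun_sub h1 h2, deriv_comp_add_const]
    rfl

lemma my_fd_bound (n : ℕ) {g : ℝ → E} (hg : ContDiff ℝ ∞ g) {h : ℝ} (hh : 0 < h)
    (y : E) (ε : ℝ) (s : ℝ)
    (hb : ∀ ξ ∈ Icc s (s + n * h), ‖iteratedDeriv n g ξ - y‖ ≤ ε) :
    ‖(Δ_[h])^[n] g s - h ^ n • y‖ ≤ h ^ n * ε := by
  induction n generalizing g y ε with
  | zero =>
    simpa using hb s (by simp [le_refl, hh.le])
  | succ n IH =>
    have key : ∀ ξ ∈ Icc s (s + n * h), ‖iteratedDeriv n (Δ_[h] g) ξ - h • y‖ ≤ h * ε := by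
      intro ξ hξ
      have hF : ContDiff ℝ ∞ (iteratedDeriv n g) := my_contDiff_iteratedDeriv n hg
      rw [my_iteratedDeriv_fwdDiff n h hg]
      have hd : ∀ x ∈ Icc ξ (ξ + h),
          HasDerivWithinAt (fun x => iteratedDeriv n g x - x • y)
            (iteratedDeriv (n+1) g x - y) (Icc ξ (ξ + h)) x := by
        intro x _
        have h1 : HasDerivAt (iteratedDeriv n g) (iteratedDeriv (n+1) g x) x := by
          rw [iteratedDeriv_succ]
          exact (hF.differentiable (by norm_num) x).hasDerivAt
        have h2 : HasDerivAt (fun x : ℝ => x • y) y x := by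
          simpa using (hasDerivAt_id x).smul_const y
        exact (h1.sub h2).hasDerivWithinAt
      have hbd : ∀ x ∈ Ico ξ (ξ + h), ‖iteratedDeriv (n+1) g x - y‖ ≤ ε := by
        intro x hx
        refine hb x ⟨le_trans hξ.1 hx.1, ?_⟩
        have h1 : x ≤ ξ + h := le_of_lt hx.2
        have h2 : ξ ≤ s + n * h := hξ.2
        push_cast
        nlinarith [hx.2, hξ.2]
      have hmvt := norm_image_sub_le_of_norm_deriv_le_segment' hd hbd (ξ + h)
        (by constructor <;> nlinarith)
      have e : (fun x => iteratedDeriv n g x - x • y) (ξ + h) -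
          (fun x => iteratedDeriv n g x - x • y) ξ =
          (iteratedDeriv n g (ξ + h) - iteratedDeriv n g ξ) - h • y := by
        simp only []
        rw [add_smul]
        abel
      rw [e] at hmvt
      calc ‖Δ_[h] (iteratedDeriv n g) ξ - h • y‖
          = ‖(iteratedDeriv n g (ξ + h) - iteratedDeriv n g ξ) - h • y‖ := rfl
        _ ≤ ε * (ξ + h - ξ) := hmvt
        _ = h * ε := by ring
    have IH' := IH (my_contDiff_fwdDiff h hg) (h • y) (h * ε) key
    rw [Function.iterate_succ_apply]
    calc ‖(Δ_[h])^[n] (Δ_[h] g) s - h ^ (n+1) • y‖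
        = ‖(Δ_[h])^[n] (Δ_[h] g) s - h ^ n • h • y‖ := by
          rw [smul_smul, ← pow_succ]
      _ ≤ h ^ n * (h * ε) := IH'
      _ = h ^ (n+1) * ε := by ring

lemma my_fd_tendsto (k : ℕ) {g : ℝ → E} (hg : ContDiff ℝ ∞ g) (t c : ℝ) (hc : 0 ≤ c) :
    Tendsto (fun h : ℝ => (h ^ k)⁻¹ • (Δ_[h])^[k] g (t - c * h)) (nhdsWithin 0 (Ioi 0))
      (nhds (iteratedDeriv k g t)) := by
  rw [Metric.tendsto_nhdsWithin_nhds]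
  intro ε hε
  have hcont : ContinuousAt (iteratedDeriv k g) t :=
    (my_contDiff_iteratedDeriv k hg).continuous.continuousAt
  obtain ⟨δ, hδ, hδ'⟩ := Metric.continuousAt_iff.mp hcont (ε / 2) (by linarith)
  refine ⟨δ / (c + k + 1), by positivity, ?_⟩
  intro h hh hd
  rw [Real.dist_eq, sub_zero, abs_of_pos hh] at hd
  replace hh : 0 < h := hh
  have hpow : (0 : ℝ) < h ^ k := pow_pos hh k
  have hb : ∀ ξ ∈ Icc (t - c * h) (t - c * h + k * h),
      ‖iteratedDeriv k g ξ - iteratedDeriv k g t‖ ≤ ε / 2 := by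
    intro ξ hξ
    have hd' : c * h + (k : ℝ) * h + h < δ := by
      have := (lt_div_iff₀ (by positivity : (0:ℝ) < c + (k : ℝ) + 1)).mp hd
      nlinarith
    have hdist : dist ξ t < δ := by
      rw [Real.dist_eq, abs_sub_lt_iff]
      constructor <;>
        linarith [hξ.1, hξ.2, mul_nonneg hc hh.le,
          mul_nonneg (Nat.cast_nonneg k : (0:ℝ) ≤ k) hh.le, hh]
    rw [← dist_eq_norm]
    exact le_of_lt (hδ' hdist)
  have hbnd := my_fd_bound k hg hh (iteratedDeriv k g t) (ε / 2) (t - c * h) hb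
  rw [dist_eq_norm]
  have e : (h ^ k)⁻¹ • (Δ_[h])^[k] g (t - c * h) - iteratedDeriv k g t =
      (h ^ k)⁻¹ • ((Δ_[h])^[k] g (t - c * h) - h ^ k • iteratedDeriv k g t) := by
    rw [smul_sub, smul_smul, inv_mul_cancel₀ hpow.ne', one_smul]
  rw [e, norm_smul, Real.norm_eq_abs, abs_of_pos (inv_pos.mpr hpow)]
  calc (h ^ k)⁻¹ * ‖(Δ_[h])^[k] g (t - c * h) - h ^ k • iteratedDeriv k g t‖
      ≤ (h ^ k)⁻¹ * (h ^ k * (ε / 2)) :=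
        mul_le_mul_of_nonneg_left hbnd (le_of_lt (inv_pos.mpr hpow))
    _ = ε / 2 := by field_simp
    _ < ε := by linarith

end aux

lemma my_sum_choose_sq (k : ℕ) :
    ∑ i ∈ Finset.range (k + 1), ((k.choose i : ℝ)) ^ 2 = ((2 * k).choose k : ℝ) := by
  have h1 : (2 * k).choose k = ∑ i ∈ Finset.range (k + 1), k.choose i * k.choose (k - i) := by
    rw [two_mul, Nat.add_choose_eq, Finset.Nat.sum_antidiagonal_eq_sum_range_succ_mk]
  have h2 : ∀ i ∈ Finset.range (k + 1), k.choose i * k.choose (k - i) = (k.choose i) ^ 2 := by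
    intro i hi
    have hik : i ≤ k := Nat.lt_succ_iff.mp (Finset.mem_range.mp hi)
    rw [Nat.choose_symm hik, sq]
  rw [h1, Finset.sum_congr rfl h2]
  push_cast
  ring

lemma my_grad_continuous {m : ℕ} {f : (Fin m → ℝ) → ℝ} (hf : ContDiff ℝ (⊤ : ℕ∞) f) :
    Continuous (grad f) := by
  have hf' : ContDiff ℝ ∞ (fderiv ℝ f) := (contDiff_infty_iff_fderiv.mp (hf.of_le (by simp))).2
  refine continuous_pi fun a => ?_
  exact (hf'.continuous).clm_apply continuous_const

lemma my_hess_continuous {m : ℕ} {f : (Fin m → ℝ) → ℝ} (hf : ContDiff ℝ (⊤ : ℕ∞) f) :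
    Continuous (hess f) := by
  have hf' : ContDiff ℝ ∞ (fderiv ℝ f) := (contDiff_infty_iff_fderiv.mp (hf.of_le (by simp))).2
  refine continuous_pi fun a => continuous_pi fun b => ?_
  have hgb : ContDiff ℝ ∞ (fun x => fderiv ℝ f x (Pi.single b 1)) :=
    hf'.clm_apply contDiff_const
  have h2 : Continuous (fderiv ℝ (fun x => fderiv ℝ f x (Pi.single b 1))) :=
    (contDiff_infty_iff_fderiv.mp hgb).2.continuous
  exact h2.clm_apply continuous_const

lemma my_d2_continuous {d m : ℕ} (φ : (Fin d → ℝ) → (Fin m → ℝ)) (x : Fin d → ℝ) :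
    Continuous (fun w => d2Contract φ x w) := by
  unfold d2Contract
  exact continuous_finset_sum _ fun a _ => (continuous_apply a).smul continuous_const

theorem scaled_hessians_tendsto_gaussNewton_limit
    {d m : ℕ} (q : ℝ → (Fin d → ℝ)) (φ : (Fin d → ℝ) → (Fin m → ℝ))
    (f : (Fin m → ℝ) → ℝ)
    (hq : ContDiff ℝ (⊤ : ℕ∞) q) (hφ : ContDiff ℝ (⊤ : ℕ∞) φ) (hf : ContDiff ℝ (⊤ : ℕ∞) f)
    (k : ℕ) (hk : 1 ≤ k) (t : ℝ)
    (z : ℝ → Fin m → ℝ) (hz : z = fun s => φ (q s))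
    (σ : ℕ → ℝ) (hσ : ∀ j, σ j = (-1 : ℝ) ^ (k - j) * (k.choose j : ℝ))
    (v : ℕ → ℝ → Fin m → ℝ)
    (hv : ∀ i h, v i h =
      (h ^ k)⁻¹ •
        ∑ j ∈ Finset.range (k + 1), σ j • z (t + ((j : ℝ) - ((k : ℝ) - (i : ℝ))) * h))
    (H HGN : ℝ → Matrix (Fin d) (Fin d) ℝ)
    (hH : ∀ h, H h =
      ∑ i ∈ Finset.range (k + 1),
        (((σ (k - i)) ^ 2 / h ^ (2 * k)) •
            ((jac φ (q t))ᵀ * hess f (v i h) * jac φ (q t)) +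
          (σ (k - i) / h ^ k) • d2Contract φ (q t) (grad f (v i h))))
    (hHGN : ∀ h, HGN h =
      ∑ i ∈ Finset.range (k + 1),
        ((σ (k - i)) ^ 2 / h ^ (2 * k)) •
          ((jac φ (q t))ᵀ * hess f (v i h) * jac φ (q t))) :
    Tendsto (fun h : ℝ => h ^ (2 * k) • HGN h) (nhdsWithin 0 (Ioi 0))
      (nhds ((((2 * k).choose k : ℝ)) •
        ((jac φ (q t))ᵀ * hess f (iteratedDeriv k z t) * jac φ (q t)))) ∧
    Tendsto (fun h : ℝ => h ^ (2 * k) • H h) (nhdsWithin 0 (Ioi 0))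
      (nhds ((((2 * k).choose k : ℝ)) •
        ((jac φ (q t))ᵀ * hess f (iteratedDeriv k z t) * jac φ (q t)))) := by
  classical
  set J := jac φ (q t) with hJ
  set L := iteratedDeriv k z t with hL
  have hzsm : ContDiff ℝ ∞ z := by
    rw [hz]; exact ((hφ.of_le (by simp)).comp (hq.of_le (by simp)))
  -- rewrite v in terms of forward differences
  have hv' : ∀ i ∈ Finset.range (k + 1), ∀ h : ℝ,
      v i h = (h ^ k)⁻¹ • (fwdDiff h)^[k] z (t - ((k : ℝ) - (i : ℝ)) * h) := by
    intro i _ h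
    rw [hv, fwdDiff_iter_eq_sum_shift]
    congr 1
    refine Finset.sum_congr rfl fun j hj => ?_
    have hσj := hσ j
    have harg : t + ((j : ℝ) - ((k : ℝ) - (i : ℝ))) * h
        = t - ((k : ℝ) - (i : ℝ)) * h + j • h := by
      rw [nsmul_eq_mul]; ring
    rw [harg, hσj, ← Int.cast_smul_eq_zsmul ℝ (((-1 : ℤ) ^ (k - j) * (k.choose j : ℤ))),
      Int.cast_mul, Int.cast_pow]
    push_cast
    ring_nf
  -- v i tends to L
  have hvt : ∀ i ∈ Finset.range (k + 1),
      Tendsto (fun h : ℝ => v i h) (nhdsWithin 0 (Ioi 0)) (nhds L) := by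
    intro i hi
    have hik : i ≤ k := Nat.lt_succ_iff.mp (Finset.mem_range.mp hi)
    have hc : (0 : ℝ) ≤ (k : ℝ) - (i : ℝ) := by
      have := (Nat.cast_le (α := ℝ)).mpr hik; linarith
    have := my_fd_tendsto k hzsm t ((k : ℝ) - (i : ℝ)) hc
    refine Tendsto.congr (fun h => ?_) this
    exact (hv' i hi h).symm
  -- continuity of the matrix map
  have hmap : Continuous fun M : Matrix (Fin m) (Fin m) ℝ => Jᵀ * M * J :=
    (continuous_const.matrix_mul continuous_id).matrix_mul continuous_const
  -- each Gauss-Newton term converges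
  have hterm : ∀ i ∈ Finset.range (k + 1),
      Tendsto (fun h : ℝ => (σ (k - i)) ^ 2 • (Jᵀ * hess f (v i h) * J))
        (nhdsWithin 0 (Ioi 0)) (nhds ((σ (k - i)) ^ 2 • (Jᵀ * hess f L * J))) := by
    intro i hi
    have h1 : Tendsto (fun h : ℝ => hess f (v i h)) (nhdsWithin 0 (Ioi 0))
        (nhds (hess f L)) := ((my_hess_continuous hf).tendsto L).comp (hvt i hi)
    exact (((hmap.tendsto _).comp h1).const_smul _)
  -- the sum of limits
  have hsumval : ∑ i ∈ Finset.range (k + 1), (σ (k - i)) ^ 2 • (Jᵀ * hess f L * J)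
      = (((2 * k).choose k : ℝ)) • (Jᵀ * hess f L * J) := by
    rw [← Finset.sum_smul]
    congr 1
    have e1 : ∀ i ∈ Finset.range (k + 1), (σ (k - i)) ^ 2 = ((k.choose i : ℝ)) ^ 2 := by
      intro i hi
      have hik : i ≤ k := Nat.lt_succ_iff.mp (Finset.mem_range.mp hi)
      rw [hσ (k - i), mul_pow, ← pow_mul, mul_comm (k - (k - i)) 2, pow_mul]
      norm_num
      exact Nat.choose_symm hik
    rw [Finset.sum_congr rfl e1, my_sum_choose_sq]
  -- the Gauss-Newton limit function
  have hG : Tendsto (fun h : ℝ => ∑ i ∈ Finset.range (k + 1),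
        (σ (k - i)) ^ 2 • (Jᵀ * hess f (v i h) * J)) (nhdsWithin 0 (Ioi 0))
      (nhds ((((2 * k).choose k : ℝ)) • (Jᵀ * hess f L * J))) := by
    rw [← hsumval]
    exact tendsto_finset_sum _ hterm
  -- h^{2k} • HGN h agrees with the above on Ioi 0
  have hEqGN : ∀ h ∈ Ioi (0:ℝ), h ^ (2 * k) • HGN h
      = ∑ i ∈ Finset.range (k + 1), (σ (k - i)) ^ 2 • (Jᵀ * hess f (v i h) * J) := by
    intro h hh
    have hne : h ^ (2 * k) ≠ 0 := pow_ne_zero _ (ne_of_gt hh)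
    rw [hHGN, Finset.smul_sum]
    refine Finset.sum_congr rfl fun i _ => ?_
    rw [smul_smul, mul_div_cancel₀]
    exact hne
  have hGN : Tendsto (fun h : ℝ => h ^ (2 * k) • HGN h) (nhdsWithin 0 (Ioi 0))
      (nhds ((((2 * k).choose k : ℝ)) • (Jᵀ * hess f L * J))) := by
    refine hG.congr' ?_
    filter_upwards [self_mem_nhdsWithin] with h hh
    exact (hEqGN h hh).symm
  refine ⟨hGN, ?_⟩
  -- the remainder terms tend to 0
  have hrem : Tendsto (fun h : ℝ => ∑ i ∈ Finset.range (k + 1),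
        (σ (k - i) * h ^ k) • d2Contract φ (q t) (grad f (v i h)))
      (nhdsWithin 0 (Ioi 0)) (nhds 0) := by
    have : ∀ i ∈ Finset.range (k + 1),
        Tendsto (fun h : ℝ => (σ (k - i) * h ^ k) • d2Contract φ (q t) (grad f (v i h)))
          (nhdsWithin 0 (Ioi 0)) (nhds 0) := by
      intro i hi
      have hs : Tendsto (fun h : ℝ => σ (k - i) * h ^ k) (nhdsWithin 0 (Ioi 0))
          (nhds 0) := by
        have hcont : Continuous fun h : ℝ => σ (k - i) * h ^ k :=
          continuous_const.mul (continuous_pow k)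
        have := (hcont.tendsto 0).mono_left (nhdsWithin_le_nhds (s := Ioi (0:ℝ)))
        simpa [zero_pow (Nat.one_le_iff_ne_zero.mp hk)] using this
      have hm : Tendsto (fun h : ℝ => d2Contract φ (q t) (grad f (v i h)))
          (nhdsWithin 0 (Ioi 0)) (nhds (d2Contract φ (q t) (grad f L))) :=
        (((my_d2_continuous φ (q t)).comp (my_grad_continuous hf)).tendsto L).comp (hvt i hi)
      have := hs.smul hm
      simpa using this
    have := tendsto_finset_sum _ this
    simpa using this
  -- h^{2k} • H h agrees with GN part + remainder on Ioi 0
  have hEqH : ∀ h ∈ Ioi (0:ℝ), h ^ (2 * k) • H h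
      = (∑ i ∈ Finset.range (k + 1), (σ (k - i)) ^ 2 • (Jᵀ * hess f (v i h) * J))
        + ∑ i ∈ Finset.range (k + 1),
            (σ (k - i) * h ^ k) • d2Contract φ (q t) (grad f (v i h)) := by
    intro h hh
    have hne : h ^ k ≠ 0 := pow_ne_zero _ (ne_of_gt hh)
    have hne2 : h ^ (2 * k) ≠ 0 := pow_ne_zero _ (ne_of_gt hh)
    rw [hH, Finset.smul_sum, ← Finset.sum_add_distrib]
    refine Finset.sum_congr rfl fun i _ => ?_
    rw [smul_add, smul_smul, smul_smul, mul_div_cancel₀ _ hne2]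
    congr 2
    rw [two_mul, pow_add]
    field_simp
  have := hG.add hrem
  rw [add_zero] at this
  refine this.congr' ?_
  filter_upwards [self_mem_nhdsWithin] with h hh
  exact (hEqH h hh).symm
end

section
/- (Main theorem, diagonal-block form.) Let q : ℝ → ℝ^d, φ : ℝ^d → ℝ^m, and f : ℝ^m → ℝ be C^∞, fix an integer k ≥ 1 and a time t ∈ ℝ, and define H(h), H_GN(h) as below. Assume the limiting Gauss-Newton curvature Jᵀ ∇²f(z^{(k)}(t)) J is a nonzero matrix. Then the true Hessian block converges to the Gauss-Newton Hessian block in relative error at rate O(h^{2k}): there exist constants C > 0 and h₀ > 0 such that for all h ∈ (0, h₀), ‖H(h) − H_GN(h)‖ ≤ C · h^{2k} · ‖H_GN(h)‖, where ‖·‖ is the Frobenius norm. -/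
/-!
STATEMENT 4 (Main theorem, diagonal-block form): With the setup of the context, if the
limiting Gauss-Newton curvature `Jᵀ ∇²f(z^{(k)}(t)) J` is nonzero, then the true Hessian
block converges to the Gauss-Newton block in relative error at rate `O(h^{2k})`:
there exist `C > 0` and `h₀ > 0` such that for all `h ∈ (0, h₀)`,
`‖H(h) - H_GN(h)‖_F ≤ C h^{2k} ‖H_GN(h)‖_F`.
-/

open Filter Set Matrix

open Topology fwdDiff

section FDHelpers

variable {E : Type*} [NormedAddCommGroup E] [NormedSpace ℝ E]

lemma contDiff_fwdDiff (h : ℝ) {g : ℝ → E} (hg : ContDiff ℝ ((⊤ : ℕ∞) : WithTop ℕ∞) g) :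
    ContDiff ℝ ((⊤ : ℕ∞) : WithTop ℕ∞) (Δ_[h] g) :=
  (hg.comp (contDiff_id.add contDiff_const)).sub hg

lemma contDiff_fwdDiff_iter (h : ℝ) (n : ℕ) {g : ℝ → E} (hg : ContDiff ℝ ((⊤ : ℕ∞) : WithTop ℕ∞) g) :
    ContDiff ℝ ((⊤ : ℕ∞) : WithTop ℕ∞) ((Δ_[h])^[n] g) := by
  induction n generalizing g with
  | zero => exact hg
  | succ n IH => rw [Function.iterate_succ_apply]; exact IH (contDiff_fwdDiff h hg)

lemma itd_sub {n : ℕ} (f g : ℝ → E) (hf : ContDiff ℝ ((⊤ : ℕ∞) : WithTop ℕ∞) f) (hg : ContDiff ℝ ((⊤ : ℕ∞) : WithTop ℕ∞) g) (x : ℝ) :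
    iteratedDeriv n (fun y => f y - g y) x = iteratedDeriv n f x - iteratedDeriv n g x := by
  have h1 : iteratedDeriv n (fun y => f y + -(g y)) x
      = iteratedDeriv n f x + iteratedDeriv n (fun y => -(g y)) x := by
    simp only [iteratedDeriv_eq_iteratedFDeriv]
    rw [iteratedFDeriv_add_apply' (hf.of_le (by exact_mod_cast le_top)).contDiffAt ((hg.of_le (by exact_mod_cast le_top)).neg).contDiffAt]
    simp
  simp only [sub_eq_add_neg]
  rw [h1]; exact congrArg _ (iteratedDeriv_neg n g x)

lemma itd_const_smul {n : ℕ} (c : ℝ) {g : ℝ → E} (hg : ContDiff ℝ ((⊤ : ℕ∞) : WithTop ℕ∞) g) (x : ℝ) :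
    iteratedDeriv n (fun y => c • g y) x = c • iteratedDeriv n g x := by
  simp only [iteratedDeriv_eq_iteratedFDeriv]
  rw [iteratedFDeriv_const_smul_apply' (hg.of_le (by exact_mod_cast le_top)).contDiffAt]
  simp

lemma itd_fwdDiff (h : ℝ) {g : ℝ → E} (hg : ContDiff ℝ ((⊤ : ℕ∞) : WithTop ℕ∞) g) (n : ℕ) :
    iteratedDeriv n (Δ_[h] g) = Δ_[h] (iteratedDeriv n g) := by
  funext x
  have h0 : Δ_[h] g = fun y => g (y + h) - g y := rfl
  rw [h0, itd_sub (fun y => g (y + h)) g (hg.comp (contDiff_id.add contDiff_const)) hg]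
  have := iteratedDeriv_comp_add_const n g h
  rw [show (fun y : ℝ => g (y + h)) = (fun z : ℝ => g (z + h)) from rfl, this]
  rfl

lemma itd_fwdDiff_iter (h : ℝ) {g : ℝ → E} (hg : ContDiff ℝ ((⊤ : ℕ∞) : WithTop ℕ∞) g) (m n : ℕ) :
    iteratedDeriv n ((Δ_[h])^[m] g) = (Δ_[h])^[m] (iteratedDeriv n g) := by
  induction m generalizing g with
  | zero => rfl
  | succ m IH =>
    rw [Function.iterate_succ_apply, Function.iterate_succ_apply,
      IH (contDiff_fwdDiff h hg), itd_fwdDiff h hg]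

/-- MVT-type bound for iterated forward differences. -/
lemma norm_fwdDiff_iter_le {g : ℝ → E} (hg : ContDiff ℝ ((⊤ : ℕ∞) : WithTop ℕ∞) g) (k : ℕ) {h : ℝ} (hh : 0 ≤ h)
    (s : ℝ) {B : ℝ} (hB : ∀ x ∈ Icc s (s + k * h), ‖iteratedDeriv k g x‖ ≤ B) :
    ‖(Δ_[h])^[k] g s‖ ≤ h ^ k * B := by
  induction k generalizing g B with
  | zero =>
    simpa using hB s (by simp)
  | succ k IH =>
    rw [Function.iterate_succ_apply]
    have key : ∀ x ∈ Icc s (s + k * h), ‖iteratedDeriv k (Δ_[h] g) x‖ ≤ h * B := by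
      intro x hx
      rw [itd_fwdDiff h hg]
      set gk := iteratedDeriv k g with hgk
      have hdiff : ∀ y ∈ Icc x (x + h),
          HasDerivWithinAt gk (iteratedDeriv (k + 1) g y) (Icc x (x + h)) y := by
        intro y _
        have hd : DifferentiableAt ℝ gk y :=
          (hg.differentiable_iteratedDeriv k (by exact_mod_cast WithTop.coe_lt_top k)).differentiableAt
        have h2 : HasDerivAt gk (iteratedDeriv (k + 1) g y) y := by
          rw [iteratedDeriv_succ]; exact hd.hasDerivAt
        exact h2.hasDerivWithinAt
      have hbound : ∀ y ∈ Ico x (x + h), ‖iteratedDeriv (k + 1) g y‖ ≤ B := by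
        intro y hy
        apply hB
        constructor
        · linarith [hx.1, hy.1]
        · have : (k : ℝ) + 1 = ((k + 1 : ℕ) : ℝ) := by push_cast; ring
          have hx2 := hx.2
          have hy2 := hy.2.le
          push_cast
          nlinarith
      have := norm_image_sub_le_of_norm_deriv_le_segment' hdiff hbound (x + h)
        (Set.right_mem_Icc.mpr (by linarith))
      have heq : Δ_[h] gk x = gk (x + h) - gk x := rfl
      rw [heq]
      calc ‖gk (x + h) - gk x‖ ≤ B * (x + h - x) := this
        _ = h * B := by ring
    calc ‖(Δ_[h])^[k] (Δ_[h] g) s‖ ≤ h ^ k * (h * B) := IH (contDiff_fwdDiff h hg) key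
      _ = h ^ (k + 1) * B := by ring

lemma fwdDiff_iter_smul_const (h : ℝ) (n : ℕ) (c : ℝ → ℝ) (a : E) (s : ℝ) :
    (Δ_[h])^[n] (fun x => c x • a) s = ((Δ_[h])^[n] c s) • a := by
  induction n generalizing c with
  | zero => rfl
  | succ n IH =>
    rw [Function.iterate_succ_apply, Function.iterate_succ_apply]
    have : Δ_[h] (fun x => c x • a) = fun x => (Δ_[h] c x) • a := by
      funext y
      simp [fwdDiff, sub_smul]
    rw [this, IH]

lemma fwdDiff_iter_pow (h : ℝ) (k p : ℕ) (hp : p ≤ k) (s : ℝ) :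
    (Δ_[h])^[k] (fun x : ℝ => x ^ p) s
      = if p = k then (k.factorial : ℝ) * h ^ k else 0 := by
  induction k generalizing p s with
  | zero =>
    interval_cases p
    simp
  | succ k IH =>
    rw [Function.iterate_succ_apply]
    have hexp : Δ_[h] (fun x : ℝ => x ^ p)
        = ∑ j ∈ Finset.range p, (fun x : ℝ => ((p.choose j : ℝ) * h ^ (p - j)) • x ^ j) := by
      funext y
      have hbin : (y + h) ^ p = ∑ j ∈ Finset.range (p + 1), y ^ j * h ^ (p - j) * (p.choose j) :=
        add_pow y h p
      simp only [fwdDiff, Finset.sum_apply]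
      rw [hbin, Finset.sum_range_succ]
      simp only [Nat.choose_self, Nat.sub_self, pow_zero, Nat.cast_one, mul_one, one_mul]
      rw [add_sub_cancel_right]
      apply Finset.sum_congr rfl
      intro j _
      simp [smul_eq_mul]
      ring
    rw [hexp, fwdDiff_iter_finset_sum]
    have hterm : ∀ j ∈ Finset.range p,
        (Δ_[h])^[k] (fun x : ℝ => ((p.choose j : ℝ) * h ^ (p - j)) • x ^ j) s
          = ((p.choose j : ℝ) * h ^ (p - j)) * (Δ_[h])^[k] (fun x : ℝ => x ^ j) s := by
      intro j _
      have : (fun x : ℝ => ((p.choose j : ℝ) * h ^ (p - j)) • x ^ j)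
          = ((p.choose j : ℝ) * h ^ (p - j)) • (fun x : ℝ => x ^ j) := rfl
      rw [this, fwdDiff_iter_const_smul]
      simp [smul_eq_mul]
    rw [Finset.sum_apply, Finset.sum_congr rfl hterm]
    by_cases hpk : p = k + 1
    · subst hpk
      rw [Finset.sum_eq_single k]
      · rw [IH k (le_refl k) s, if_pos rfl, if_pos rfl]
        have h1 : (k + 1) - k = 1 := by omega
        rw [Nat.choose_succ_self_right, h1, pow_one, Nat.factorial_succ]
        push_cast
        ring
      · intro j hj hjk
        have hjle : j ≤ k := by have := Finset.mem_range.mp hj; omega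
        rw [IH j hjle s, if_neg hjk, mul_zero]
      · intro hk
        exact absurd (Finset.self_mem_range_succ k) hk
    · rw [if_neg hpk, Finset.sum_eq_zero]
      intro j hj
      have hjp := Finset.mem_range.mp hj
      have hj' : j ≠ k := by omega
      rw [IH j (by omega) s, if_neg hj', mul_zero]

lemma itd_smul_const {n : ℕ} {c : ℝ → ℝ} (hc : ContDiff ℝ ((⊤ : ℕ∞) : WithTop ℕ∞) c) (a : E) (x : ℝ) :
    iteratedDeriv n (fun y => c y • a) x = iteratedDeriv n c x • a := by
  induction n generalizing c with
  | zero => rfl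
  | succ n IH =>
    rw [iteratedDeriv_succ', iteratedDeriv_succ']
    have : deriv (fun y => c y • a) = fun y => deriv c y • a := by
      funext y
      exact deriv_smul_const (hc.differentiable (by simp)).differentiableAt a
    rw [this, IH (contDiff_infty_iff_deriv.mp hc).2]

lemma itd_pow_self (k : ℕ) :
    iteratedDeriv k (fun x : ℝ => x ^ k) = fun _ => (k.factorial : ℝ) := by
  induction k with
  | zero => funext x; simp
  | succ k IH =>
    funext x
    rw [iteratedDeriv_succ']
    have : deriv (fun x : ℝ => x ^ (k + 1)) = fun x : ℝ => ((k : ℝ) + 1) * x ^ k := by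
      funext y
      rw [deriv_pow_field (k + 1)]
      simp
    rw [this]
    have hsm : (fun x : ℝ => ((k : ℝ) + 1) * x ^ k) = fun x : ℝ => ((k : ℝ) + 1) • ((fun x : ℝ => x ^ k) x) := by
      funext y; simp [smul_eq_mul]
    have hck : ContDiff ℝ ((⊤ : ℕ∞) : WithTop ℕ∞) (fun x : ℝ => x ^ k) := by
      exact contDiff_id.pow k
    rw [hsm, itd_const_smul ((k : ℝ) + 1) hck x, IH]
    simp only [smul_eq_mul, Nat.factorial_succ]
    push_cast
    ring

end FDHelpers

section Approx

variable {E : Type*} [NormedAddCommGroup E] [NormedSpace ℝ E]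

open fwdDiff

lemma fwdDiff_iter_approx_s4 {g : ℝ → E} (hg : ContDiff ℝ ((⊤ : ℕ∞) : WithTop ℕ∞) g) (k : ℕ) (t : ℝ)
    {ε : ℝ} (hε : 0 < ε) :
    ∃ δ > 0, ∀ h : ℝ, 0 < h → h < δ → ∀ s : ℝ, |s - t| ≤ k * h →
      ‖(h ^ k)⁻¹ • (Δ_[h])^[k] g s - iteratedDeriv k g t‖ ≤ ε := by
  set a := iteratedDeriv k g t with ha
  have hcont : Continuous (iteratedDeriv k g) :=
    hg.continuous_iteratedDeriv k (by exact_mod_cast le_top)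
  obtain ⟨δ', hδ'pos, hδ'⟩ := Metric.continuousAt_iff.mp hcont.continuousAt ε hε
  refine ⟨δ' / (2 * k + 1), by positivity, ?_⟩
  intro h hh hhδ s hs
  have hfac : (k.factorial : ℝ) ≠ 0 := by exact_mod_cast k.factorial_ne_zero
  have hhk : (h : ℝ) ^ k ≠ 0 := pow_ne_zero k hh.ne'
  set c : E := ((k.factorial : ℝ))⁻¹ • a with hc
  set P : ℝ → E := fun x => (x ^ k) • c with hP
  have hPsm : ContDiff ℝ ((⊤ : ℕ∞) : WithTop ℕ∞) P := (contDiff_id.pow k).smul contDiff_const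
  set w : ℝ → E := fun x => g x - P x with hw
  have hwsm : ContDiff ℝ ((⊤ : ℕ∞) : WithTop ℕ∞) w := hg.sub hPsm
  -- the forward difference of P
  have hDP : ∀ y : ℝ, (Δ_[h])^[k] P y = (h ^ k) • a := by
    intro y
    rw [hP]
    rw [fwdDiff_iter_smul_const h k (fun x => x ^ k) c y,
      fwdDiff_iter_pow h k k le_rfl y, if_pos rfl, hc, smul_smul]
    congr 1
    field_simp
  -- split g
  have hsplit : (Δ_[h])^[k] g s = (Δ_[h])^[k] w s + (h ^ k) • a := by
    have hgw : (w + P) = g := by funext x; simp [hw]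
    calc (Δ_[h])^[k] g s = (Δ_[h])^[k] (w + P) s := by rw [hgw]
      _ = (Δ_[h])^[k] w s + (Δ_[h])^[k] P s := by rw [fwdDiff_iter_add]; rfl
      _ = (Δ_[h])^[k] w s + (h ^ k) • a := by rw [hDP]
  -- iterated derivative of w
  have hitdw : ∀ x : ℝ, iteratedDeriv k w x = iteratedDeriv k g x - a := by
    intro x
    rw [hw]
    rw [itd_sub g P hg hPsm x]
    congr 1
    rw [hP]
    rw [itd_smul_const (c := fun x : ℝ => x ^ k) (by exact contDiff_id.pow k) c x]
    have := congrFun (itd_pow_self k) x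
    rw [this, hc, smul_smul]
    rw [mul_inv_cancel₀ hfac, one_smul]
  -- bound on the k-th derivative of w on the window
  have hBw : ∀ x ∈ Icc s (s + k * h), ‖iteratedDeriv k w x‖ ≤ ε := by
    intro x hx
    rw [hitdw x]
    have hxt : dist x t < δ' := by
      rw [Real.dist_eq]
      have h1 : |x - s| ≤ k * h := by
        rw [abs_le]; constructor
        · linarith [hx.1, mul_nonneg (Nat.cast_nonneg (α := ℝ) k) hh.le]
        · linarith [hx.2]
      have h2 : |x - t| ≤ 2 * k * h := by
        have h3 : x - t = (x - s) + (s - t) := by ring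
        calc |x - t| = |(x - s) + (s - t)| := by rw [h3]
          _ ≤ |x - s| + |s - t| := abs_add_le _ _
          _ ≤ k * h + k * h := add_le_add h1 hs
          _ = 2 * k * h := by ring
      calc |x - t| ≤ 2 * k * h := h2
        _ < (2 * k + 1) * h := by nlinarith
        _ < (2 * k + 1) * (δ' / (2 * k + 1)) := by
            apply mul_lt_mul_of_pos_left hhδ; positivity
        _ = δ' := by field_simp
    have := hδ' hxt
    rw [dist_eq_norm] at this
    exact this.le
  have hkey := norm_fwdDiff_iter_le hwsm k hh.le s hBw
  have hfinal : (h ^ k)⁻¹ • (Δ_[h])^[k] g s - a = (h ^ k)⁻¹ • (Δ_[h])^[k] w s := by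
    rw [hsplit, smul_add, smul_smul, inv_mul_cancel₀ hhk, one_smul, add_sub_cancel_right]
  rw [hfinal, norm_smul, Real.norm_eq_abs, abs_of_pos (inv_pos.2 (pow_pos hh k))]
  calc (h ^ k)⁻¹ * ‖(Δ_[h])^[k] w s‖ ≤ (h ^ k)⁻¹ * (h ^ k * ε) := by
        apply mul_le_mul_of_nonneg_left hkey
        positivity
    _ = ε := by field_simp

end Approx


section FrobLemmas

variable {d : ℕ}

lemma frob_nonneg (A : Matrix (Fin d) (Fin d) ℝ) : 0 ≤ frob A := Real.sqrt_nonneg _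

lemma frob_smul (c : ℝ) (A : Matrix (Fin d) (Fin d) ℝ) : frob (c • A) = |c| * frob A := by
  unfold frob
  have h1 : ∀ p r : Fin d, ((c • A) p r) ^ 2 = c ^ 2 * (A p r) ^ 2 := by
    intro p r
    simp [Matrix.smul_apply, smul_eq_mul]
    ring
  simp_rw [h1, ← Finset.mul_sum]
  rw [Real.sqrt_mul (sq_nonneg c), Real.sqrt_sq_eq_abs]

lemma frob_eq_norm (A : Matrix (Fin d) (Fin d) ℝ) :
    frob A = ‖(WithLp.equiv 2 (Fin d × Fin d → ℝ)).symm (fun p => A p.1 p.2)‖ := by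
  rw [EuclideanSpace.norm_eq]
  unfold frob
  congr 1
  rw [Fintype.sum_prod_type]
  apply Finset.sum_congr rfl
  intro p _
  apply Finset.sum_congr rfl
  intro r _
  simp only [WithLp.equiv_symm_apply, WithLp.ofLp_toLp, Real.norm_eq_abs, sq_abs]

lemma frob_add_le (A B : Matrix (Fin d) (Fin d) ℝ) : frob (A + B) ≤ frob A + frob B := by
  rw [frob_eq_norm, frob_eq_norm, frob_eq_norm]
  have h1 : (WithLp.equiv 2 (Fin d × Fin d → ℝ)).symm (fun p => (A + B) p.1 p.2)
      = (WithLp.equiv 2 (Fin d × Fin d → ℝ)).symm (fun p => A p.1 p.2)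
        + (WithLp.equiv 2 (Fin d × Fin d → ℝ)).symm (fun p => B p.1 p.2) := rfl
  rw [h1]
  exact norm_add_le _ _

lemma frob_zero : frob (0 : Matrix (Fin d) (Fin d) ℝ) = 0 := by
  unfold frob
  simp

lemma frob_sum_le {ι : Type*} (s : Finset ι) (F : ι → Matrix (Fin d) (Fin d) ℝ) :
    frob (∑ i ∈ s, F i) ≤ ∑ i ∈ s, frob (F i) := by
  classical
  induction s using Finset.induction_on with
  | empty => simp [frob_zero]
  | insert _ _ hnotmem IH =>
    rename_i b s'
    rw [Finset.sum_insert hnotmem, Finset.sum_insert hnotmem]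
    calc frob (F b + ∑ i ∈ s', F i) ≤ frob (F b) + frob (∑ i ∈ s', F i) := frob_add_le _ _
      _ ≤ frob (F b) + ∑ i ∈ s', frob (F i) := by linarith
  
lemma frob_pos {A : Matrix (Fin d) (Fin d) ℝ} (hA : A ≠ 0) : 0 < frob A := by
  rw [frob_eq_norm, norm_pos_iff]
  intro h0
  apply hA
  have h1 : (fun p : Fin d × Fin d => A p.1 p.2) = 0 := by
    have := congrArg (WithLp.equiv 2 (Fin d × Fin d → ℝ)) h0
    simpa using this
  ext p r
  exact congrFun h1 (p, r)

lemma frob_continuous : Continuous (frob (d := d)) := by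
  unfold frob
  apply Real.continuous_sqrt.comp
  apply continuous_finset_sum
  intro p _
  apply continuous_finset_sum
  intro r _
  exact ((continuous_apply r).comp (continuous_apply p)).pow 2

end FrobLemmas

theorem hessian_gaussNewton_relative_error_rate
    {d m : ℕ} (q : ℝ → (Fin d → ℝ)) (φ : (Fin d → ℝ) → (Fin m → ℝ))
    (f : (Fin m → ℝ) → ℝ)
    (hq : ContDiff ℝ (⊤ : ℕ∞) q) (hφ : ContDiff ℝ (⊤ : ℕ∞) φ) (hf : ContDiff ℝ (⊤ : ℕ∞) f)
    (k : ℕ) (hk : 1 ≤ k) (t : ℝ)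
    (z : ℝ → Fin m → ℝ) (hz : z = fun s => φ (q s))
    (σ : ℕ → ℝ) (hσ : ∀ j, σ j = (-1 : ℝ) ^ (k - j) * (k.choose j : ℝ))
    (v : ℕ → ℝ → Fin m → ℝ)
    (hv : ∀ i h, v i h =
      (h ^ k)⁻¹ •
        ∑ j ∈ Finset.range (k + 1), σ j • z (t + ((j : ℝ) - ((k : ℝ) - (i : ℝ))) * h))
    (H HGN : ℝ → Matrix (Fin d) (Fin d) ℝ)
    (hH : ∀ h, H h =
      ∑ i ∈ Finset.range (k + 1),
        (((σ (k - i)) ^ 2 / h ^ (2 * k)) •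
            ((jac φ (q t))ᵀ * hess f (v i h) * jac φ (q t)) +
          (σ (k - i) / h ^ k) • d2Contract φ (q t) (grad f (v i h))))
    (hHGN : ∀ h, HGN h =
      ∑ i ∈ Finset.range (k + 1),
        ((σ (k - i)) ^ 2 / h ^ (2 * k)) •
          ((jac φ (q t))ᵀ * hess f (v i h) * jac φ (q t)))
    (hnz : (jac φ (q t))ᵀ * hess f (iteratedDeriv k z t) * jac φ (q t) ≠ 0) :
    ∃ C : ℝ, 0 < C ∧ ∃ h₀ : ℝ, 0 < h₀ ∧
      ∀ h : ℝ, 0 < h → h < h₀ →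
        frob (H h - HGN h) ≤ C * h ^ (2 * k) * frob (HGN h) := by
  
  have hzsm : ContDiff ℝ ((⊤ : ℕ∞) : WithTop ℕ∞) z := by
    rw [hz]; exact (hφ.comp hq).of_le (by simp)
  set a : Fin m → ℝ := iteratedDeriv k z t with ha
  set J : Matrix (Fin m) (Fin d) ℝ := jac φ (q t) with hJ
  set M : Matrix (Fin d) (Fin d) ℝ := Jᵀ * hess f a * J with hM
  -- the reference function for the clique values
  set u : ℝ → ℝ → (Fin m → ℝ) := fun h x => (h ^ k)⁻¹ • (Δ_[h])^[k] z (x - k * h) with hu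
  have hu_apply : ∀ (h x : ℝ), u h x = (h ^ k)⁻¹ • (Δ_[h])^[k] z (x - k * h) := fun _ _ => rfl
  have hvu : ∀ i, i ≤ k → ∀ h : ℝ, 0 < h → v i h = u h (t + i * h) := by
    intro i hik h hh
    rw [hv i h, hu_apply]
    congr 1
    rw [fwdDiff_iter_eq_sum_shift]
    apply Finset.sum_congr rfl
    intro j hj
    have harg : (t + i * h - k * h) + j • h = t + ((j : ℝ) - ((k : ℝ) - (i : ℝ))) * h := by
      rw [nsmul_eq_mul]; ring
    rw [harg, hσ j, ← Int.cast_smul_eq_zsmul ℝ]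
    congr 1
    push_cast
    ring
  -- tendsto of clique values
  have htv : ∀ i, i ≤ k → Tendsto (fun h => v i h) (𝓝[>] (0:ℝ)) (𝓝 a) := by
    intro i hik
    rw [Metric.tendsto_nhdsWithin_nhds]
    intro ε hε
    obtain ⟨δ, hδpos, hδ⟩ := fwdDiff_iter_approx_s4 hzsm k t (half_pos hε)
    refine ⟨δ, hδpos, ?_⟩
    intro h hmem hdist
    have hh : (0:ℝ) < h := hmem
    have hhδ : h < δ := by rwa [Real.dist_eq, sub_zero, abs_of_pos hh] at hdist
    have hsarg : |t + i * h - k * h - t| ≤ k * h := by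
      have h1 : t + i * h - k * h - t = ((i:ℝ) - k) * h := by ring
      rw [h1, abs_mul, abs_of_pos hh]
      apply mul_le_mul_of_nonneg_right _ hh.le
      rw [abs_sub_comm, abs_of_nonneg (sub_nonneg.mpr (by exact_mod_cast hik))]
      have h2 : (0:ℝ) ≤ (i:ℝ) := Nat.cast_nonneg i
      linarith
    have hres := hδ h hh hhδ (t + i * h - k * h) hsarg
    rw [dist_eq_norm, hvu i hik h hh, hu_apply]
    have harg2 : t + i * h - k * h = t + (i:ℝ) * h - (k:ℝ) * h := by ring
    calc ‖(h^k)⁻¹ • (Δ_[h])^[k] z (t + (i:ℝ) * h - k * h) - a‖ ≤ ε/2 := hres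
      _ < ε := half_lt_self hε
  -- smoothness of grad f and continuity of hess f
  have hgradsm : ContDiff ℝ (⊤ : ℕ∞) (grad f) := by
    unfold grad
    apply contDiff_pi.mpr
    intro a0
    exact (hf.fderiv_right (by simp)).clm_apply contDiff_const
  have hhesscont : Continuous (hess f) := by
    unfold hess
    apply continuous_pi; intro a0
    apply continuous_pi; intro b0
    have hb : ContDiff ℝ (⊤ : ℕ∞) (fun x : Fin m → ℝ => fderiv ℝ f x (Pi.single b0 1)) :=
      (hf.fderiv_right (by simp)).clm_apply contDiff_const
    have hb2 : ContDiff ℝ (⊤ : ℕ∞) (fun x : Fin m → ℝ =>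
        fderiv ℝ (fun x : Fin m → ℝ => fderiv ℝ f x (Pi.single b0 1)) x (Pi.single a0 1)) :=
      (hb.fderiv_right (by simp)).clm_apply contDiff_const
    exact hb2.continuous
  -- bounds on the derivatives of z on a compact window
  set K : Set ℝ := Icc (t - (k+1)) (t + (k+1)) with hK
  have hBzex : ∀ j : ℕ, ∃ B : ℝ, 0 ≤ B ∧ ∀ x ∈ K, ‖iteratedDeriv (k + j) z x‖ ≤ B := by
    intro j
    obtain ⟨B, hB⟩ := (isCompact_Icc).exists_bound_of_continuousOn
      ((hzsm.continuous_iteratedDeriv (k+j) (by exact_mod_cast le_top)).continuousOn)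
    exact ⟨max B 0, le_max_right _ _, fun x hx => (hB x hx).trans (le_max_left _ _)⟩
  choose Bz hBz0 hBzb using hBzex
  set D : ℝ := 1 + ∑ j ∈ Finset.range (k+1), Bz j with hD
  have hD1 : (1:ℝ) ≤ D := by
    have h1 : (0:ℝ) ≤ ∑ j ∈ Finset.range (k+1), Bz j := Finset.sum_nonneg fun j _ => hBz0 j
    rw [hD]; linarith
  have hDj : ∀ j, j ≤ k → Bz j ≤ D := by
    intro j hj
    have h1 : Bz j ≤ ∑ j' ∈ Finset.range (k+1), Bz j' :=
      Finset.single_le_sum (fun j' _ => hBz0 j') (Finset.mem_range.mpr (by omega))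
    rw [hD]; linarith
  have hadd : ∀ (j : ℕ) (y : ℝ), iteratedDeriv k (iteratedDeriv j z) y = iteratedDeriv (k + j) z y := by
    intro j y
    simp only [iteratedDeriv_eq_iterate]
    rw [← Function.iterate_add_apply]
  have hzj : ∀ j : ℕ, ContDiff ℝ ((⊤ : ℕ∞) : WithTop ℕ∞) (iteratedDeriv j z) := by
    intro j; rw [iteratedDeriv_eq_iterate]; exact ContDiff.iterate_deriv j hzsm
  have husm : ∀ h : ℝ, ContDiff ℝ ((⊤ : ℕ∞) : WithTop ℕ∞) (u h) := by
    intro h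
    have he : u h = fun x => (h ^ k)⁻¹ • (Δ_[h])^[k] z (x - k * h) := rfl
    rw [he]
    exact (((contDiff_fwdDiff_iter h k hzsm).comp (contDiff_id.sub contDiff_const))).const_smul _
  have hitd_u : ∀ (h : ℝ) (j : ℕ) (x : ℝ),
      iteratedDeriv j (u h) x = (h ^ k)⁻¹ • (Δ_[h])^[k] (iteratedDeriv j z) (x - k * h) := by
    intro h j x
    have e1 : u h = fun y => (h ^ k)⁻¹ • ((Δ_[h])^[k] z) (y + (-((k:ℝ) * h))) := by
      funext y; rw [hu_apply, sub_eq_add_neg]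
    rw [e1]
    rw [itd_const_smul (g := fun y => ((Δ_[h])^[k] z) (y + (-((k:ℝ) * h)))) ((h^k)⁻¹)
      ((contDiff_fwdDiff_iter h k hzsm).comp (contDiff_id.add contDiff_const)) x]
    congr 1
    have e2 := iteratedDeriv_comp_add_const j ((Δ_[h])^[k] z) (-((k:ℝ) * h))
    rw [e2]
    rw [itd_fwdDiff_iter h hzsm k j]
    simp only [sub_eq_add_neg]
  -- uniform bounds for derivatives of u h on [t, t + k h], for 0 < h ≤ 1
  have hub : ∀ h : ℝ, 0 < h → h ≤ 1 → ∀ j, j ≤ k → ∀ x ∈ Icc t (t + k * h),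
      ‖iteratedDeriv j (u h) x‖ ≤ Bz j := by
    intro h hh h1 j hj x hx
    rw [hitd_u h j x, norm_smul, Real.norm_eq_abs, abs_of_pos (inv_pos.2 (pow_pos hh k))]
    have hkh0 : (0:ℝ) ≤ (k:ℝ) * h := by positivity
    have hkh1 : (k:ℝ) * h ≤ k := by nlinarith [Nat.cast_nonneg (α := ℝ) k]
    have hwindow : ∀ y ∈ Icc (x - k*h) (x - k*h + k * h),
        ‖iteratedDeriv k (iteratedDeriv j z) y‖ ≤ Bz j := by
      intro y hy
      rw [hadd j y]
      apply hBzb j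
      rw [hK, Set.mem_Icc]
      constructor
      · have := hy.1; have := hx.1; simp only [Set.mem_Icc] at hx; linarith [hx.1]
      · have := hy.2; simp only [Set.mem_Icc] at hx; linarith [hx.2]
    have hkey := norm_fwdDiff_iter_le (hzj j) k hh.le (x - k*h) hwindow
    calc (h^k)⁻¹ * ‖(Δ_[h])^[k] (iteratedDeriv j z) (x - k*h)‖
        ≤ (h^k)⁻¹ * (h^k * Bz j) := by
          apply mul_le_mul_of_nonneg_left hkey; positivity
      _ = Bz j := by field_simp
  -- bounds on derivatives of grad f on a ball
  have hCgex : ∀ i : ℕ, ∃ C : ℝ, 0 ≤ C ∧ ∀ y ∈ Metric.closedBall (0 : Fin m → ℝ) (Bz 0),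
      ‖iteratedFDeriv ℝ i (grad f) y‖ ≤ C := by
    intro i
    obtain ⟨C, hC⟩ := (isCompact_closedBall (0 : Fin m → ℝ) (Bz 0)).exists_bound_of_continuousOn
      ((ContDiff.continuous_iteratedFDeriv (by exact_mod_cast le_top) hgradsm).continuousOn)
    exact ⟨max C 0, le_max_right _ _, fun y hy => (hC y hy).trans (le_max_left _ _)⟩
  choose Cg hCg0 hCgb using hCgex
  set CC : ℝ := ∑ i ∈ Finset.range (k+1), Cg i with hCC
  have hCC0 : 0 ≤ CC := Finset.sum_nonneg fun i _ => hCg0 i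
  have hCCi : ∀ i, i ≤ k → Cg i ≤ CC := fun i hi =>
    Finset.single_le_sum (fun i' _ => hCg0 i') (Finset.mem_range.mpr (by omega))
  set C₂ : ℝ := (k.factorial : ℝ) * CC * D ^ k with hC₂
  have hC₂0 : 0 ≤ C₂ := by
    rw [hC₂]
    have : (0:ℝ) ≤ D := by linarith
    positivity
  -- bound on the k-th derivative of grad f ∘ u h
  have hGb : ∀ h : ℝ, 0 < h → h ≤ 1 → ∀ x ∈ Icc t (t + k * h),
      ‖iteratedDeriv k (grad f ∘ u h) x‖ ≤ C₂ := by
    intro h hh h1 x hx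
    rw [← norm_iteratedFDeriv_eq_norm_iteratedDeriv]
    have hball0 : u h x ∈ Metric.closedBall (0 : Fin m → ℝ) (Bz 0) := by
      rw [Metric.mem_closedBall, dist_zero_right]
      have := hub h hh h1 0 (Nat.zero_le k) x hx
      rwa [iteratedDeriv_zero] at this
    have hcomp := norm_iteratedFDeriv_comp_le (𝕜 := ℝ) (g := grad f) (f := u h) (n := k)
      (N := ((⊤ : ℕ∞) : WithTop ℕ∞)) (hgradsm.of_le (by simp)) (husm h)
      (by exact_mod_cast le_top) x
      (C := CC) (D := D)
      (fun i hi => (hCgb i (u h x) hball0).trans (hCCi i hi))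
      (fun i hi1 hik => by
        rw [norm_iteratedFDeriv_eq_norm_iteratedDeriv]
        calc ‖iteratedDeriv i (u h) x‖ ≤ Bz i := hub h hh h1 i hik x hx
          _ ≤ D := hDj i hik
          _ ≤ D ^ i := le_self_pow₀ hD1 (by omega))
    calc ‖iteratedFDeriv ℝ k (grad f ∘ u h) x‖ ≤ (k.factorial : ℝ) * CC * D ^ k := hcomp
      _ = C₂ := by rw [hC₂]
  -- the correction vector Φ
  set Φ : ℝ → (Fin m → ℝ) := fun h => ∑ i ∈ Finset.range (k+1), σ (k - i) • grad f (v i h) with hΦ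
  have hΦeq : ∀ h : ℝ, 0 < h → Φ h = ((-1:ℝ))^k • (Δ_[h])^[k] (grad f ∘ u h) t := by
    intro h hh
    simp only [hΦ]
    rw [fwdDiff_iter_eq_sum_shift, Finset.smul_sum]
    apply Finset.sum_congr rfl
    intro i hi
    have hik : i ≤ k := by have := Finset.mem_range.mp hi; omega
    rw [← Int.cast_smul_eq_zsmul ℝ, smul_smul]
    have h1 : (grad f ∘ u h) (t + i • h) = grad f (v i h) := by
      rw [Function.comp_apply, nsmul_eq_mul, ← hvu i hik h hh]
    rw [h1, hσ (k - i), Nat.sub_sub_self hik, Nat.choose_symm hik]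
    congr 1
    have hsc : ((-1:ℝ))^k * ((-1:ℝ))^(k-i) = (-1:ℝ)^i := by
      rw [← pow_add]
      have h2 : k + (k - i) = 2*(k-i) + i := by omega
      rw [h2, pow_add, pow_mul, neg_one_sq, one_pow, one_mul]
    push_cast
    rw [← mul_assoc, hsc]
  have hΦb : ∀ h : ℝ, 0 < h → h ≤ 1 → ‖Φ h‖ ≤ h^k * C₂ := by
    intro h hh h1
    rw [hΦeq h hh, norm_smul]
    have hn1 : ‖((-1:ℝ))^k‖ = 1 := by
      rw [norm_pow, norm_neg, norm_one, one_pow]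
    rw [hn1, one_mul]
    exact norm_fwdDiff_iter_le ((hgradsm.of_le (by simp)).comp (husm h)) k hh.le t (hGb h hh h1)
  -- the limit matrix S and its positivity
  set S : Matrix (Fin d) (Fin d) ℝ := (∑ i ∈ Finset.range (k+1), (σ (k-i))^2) • M with hS
  have hsum1 : (1:ℝ) ≤ ∑ i ∈ Finset.range (k+1), (σ (k-i))^2 := by
    have hσk : σ (k - 0) ^ 2 = 1 := by
      rw [Nat.sub_zero, hσ k]
      simp
    calc (1:ℝ) = σ (k-0)^2 := hσk.symm
      _ ≤ ∑ i ∈ Finset.range (k+1), (σ (k-i))^2 :=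
          Finset.single_le_sum (f := fun i => (σ (k-i))^2) (a := 0) (fun i _ => sq_nonneg _)
            (Finset.mem_range.mpr (Nat.succ_pos k))
  have hSpos : 0 < frob S := by
    rw [hS, frob_smul]
    apply mul_pos
    · rw [abs_pos]; intro h0; rw [h0] at hsum1; linarith
    · exact frob_pos hnz
  -- convergence of the scaled Gauss-Newton matrix
  have htendS : Tendsto (fun h => ∑ i ∈ Finset.range (k+1), (σ (k-i))^2 • (Jᵀ * hess f (v i h) * J))
      (𝓝[>] (0:ℝ)) (𝓝 S) := by
    rw [hS, Finset.sum_smul]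
    apply tendsto_finset_sum
    intro i hi
    have hik : i ≤ k := by have := Finset.mem_range.mp hi; omega
    have hcont : Continuous (fun w : Fin m → ℝ => (σ (k-i))^2 • (Jᵀ * hess f w * J)) :=
      by exact (((continuous_const : Continuous fun _ : Fin m → ℝ => Jᵀ).matrix_mul hhesscont).matrix_mul (continuous_const : Continuous fun _ : Fin m → ℝ => J)).const_smul ((σ (k-i))^2)
    exact (hcont.tendsto a).comp (htv i hik)
  have httt : Tendsto (fun h : ℝ => h^(2*k) * frob (HGN h)) (𝓝[>] (0:ℝ)) (𝓝 (frob S)) := by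
    have h0 := (frob_continuous.tendsto S).comp htendS
    refine Filter.Tendsto.congr' ?_ h0
    filter_upwards [self_mem_nhdsWithin] with h hh
    have hh' : (0:ℝ) < h := hh
    have hne : h^(2*k) ≠ 0 := pow_ne_zero _ hh'.ne'
    have he : h^(2*k) • HGN h = ∑ i ∈ Finset.range (k+1), (σ (k-i))^2 • (Jᵀ * hess f (v i h) * J) := by
      rw [hHGN h, Finset.smul_sum]
      apply Finset.sum_congr rfl
      intro i _
      rw [smul_smul]
      congr 1
      field_simp
    calc frob (∑ i ∈ Finset.range (k+1), (σ (k-i))^2 • (Jᵀ * hess f (v i h) * J))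
        = frob (h^(2*k) • HGN h) := by rw [he]
      _ = |h^(2*k)| * frob (HGN h) := frob_smul _ _
      _ = h^(2*k) * frob (HGN h) := by rw [abs_of_pos (pow_pos hh' _)]
  have hlowev : ∀ᶠ h in 𝓝[>] (0:ℝ), frob S / 2 ≤ h^(2*k) * frob (HGN h) :=
    (httt.eventually (lt_mem_nhds (half_lt_self hSpos))).mono fun h hh => hh.le
  obtain ⟨h₁, h₁pos, hball⟩ := Metric.mem_nhdsWithin_iff.mp hlowev
  -- bound for the contraction
  set L : ℝ := ∑ b : Fin m, frob (hess (fun y => φ y b) (q t)) with hLdef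
  have hL0 : 0 ≤ L := Finset.sum_nonneg fun b _ => frob_nonneg _
  have hd2c : ∀ w : Fin m → ℝ, frob (d2Contract φ (q t) w) ≤ L * ‖w‖ := by
    intro w
    unfold d2Contract
    calc frob (∑ b : Fin m, w b • hess (fun y => φ y b) (q t))
        ≤ ∑ b : Fin m, frob (w b • hess (fun y => φ y b) (q t)) := frob_sum_le _ _
      _ = ∑ b : Fin m, |w b| * frob (hess (fun y => φ y b) (q t)) := by
          apply Finset.sum_congr rfl; intro b _; exact frob_smul _ _
      _ ≤ ∑ b : Fin m, ‖w‖ * frob (hess (fun y => φ y b) (q t)) := by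
          apply Finset.sum_le_sum; intro b _
          apply mul_le_mul_of_nonneg_right _ (frob_nonneg _)
          rw [← Real.norm_eq_abs]; exact norm_le_pi_norm w b
      _ = L * ‖w‖ := by rw [← Finset.mul_sum, mul_comm, ← hLdef]
  -- difference of the two Hessian blocks
  have hdiffeq : ∀ h : ℝ, H h - HGN h = (h^k)⁻¹ • d2Contract φ (q t) (Φ h) := by
    intro h
    rw [hH h, hHGN h, ← Finset.sum_sub_distrib]
    have hstep : ∀ i ∈ Finset.range (k+1),
        ((((σ (k-i))^2 / h^(2*k)) • (Jᵀ * hess f (v i h) * J)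
            + (σ (k-i) / h^k) • d2Contract φ (q t) (grad f (v i h)))
          - ((σ (k-i))^2 / h^(2*k)) • (Jᵀ * hess f (v i h) * J))
        = (σ (k-i) / h^k) • d2Contract φ (q t) (grad f (v i h)) := by
      intro i _; rw [add_sub_cancel_left]
    rw [Finset.sum_congr rfl hstep]
    simp only [hΦ, d2Contract, Finset.smul_sum, smul_smul, Finset.sum_apply, Pi.smul_apply,
      smul_eq_mul, Finset.mul_sum, Finset.sum_smul]
    rw [Finset.sum_comm]
    apply Finset.sum_congr rfl; intro i _
    apply Finset.sum_congr rfl; intro b _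
    congr 1
    ring
  -- final assembly
  refine ⟨(L * C₂ + 1) * (2 / frob S), ?_, min h₁ 1, lt_min h₁pos one_pos, ?_⟩
  · apply mul_pos
    · nlinarith [mul_nonneg hL0 hC₂0]
    · exact div_pos two_pos hSpos
  · intro h hh hlt
    have hlt1 : h < h₁ := lt_of_lt_of_le hlt (min_le_left _ _)
    have hle1 : h ≤ 1 := le_of_lt (lt_of_lt_of_le hlt (min_le_right _ _))
    have hmem : h ∈ Metric.ball (0:ℝ) h₁ ∩ Ioi 0 :=
      ⟨by rw [Metric.mem_ball, Real.dist_eq, sub_zero, abs_of_pos hh]; exact hlt1, hh⟩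
    have hlower : frob S / 2 ≤ h^(2*k) * frob (HGN h) := hball hmem
    have hupper : frob (H h - HGN h) ≤ L * C₂ := by
      rw [hdiffeq h, frob_smul, abs_of_pos (inv_pos.2 (pow_pos hh k))]
      calc (h^k)⁻¹ * frob (d2Contract φ (q t) (Φ h))
          ≤ (h^k)⁻¹ * (L * ‖Φ h‖) := by
            apply mul_le_mul_of_nonneg_left (hd2c (Φ h))
            positivity
        _ ≤ (h^k)⁻¹ * (L * (h^k * C₂)) := by
            apply mul_le_mul_of_nonneg_left _ (by positivity)
            exact mul_le_mul_of_nonneg_left (hΦb h hh hle1) hL0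
        _ = L * C₂ := by field_simp
    have hSne : frob S ≠ 0 := ne_of_gt hSpos
    calc frob (H h - HGN h) ≤ L * C₂ := hupper
      _ ≤ L * C₂ + 1 := by linarith
      _ = (L * C₂ + 1) * (2 / frob S) * (frob S / 2) := by field_simp
      _ ≤ (L * C₂ + 1) * (2 / frob S) * (h^(2*k) * frob (HGN h)) := by
          apply mul_le_mul_of_nonneg_left hlower
          apply mul_nonneg
          · nlinarith [mul_nonneg hL0 hC₂0]
          · exact le_of_lt (div_pos two_pos hSpos)
      _ = (L * C₂ + 1) * (2 / frob S) * h^(2*k) * frob (HGN h) := by ring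
end

section
/- (Squared task-space acceleration corollary, k = 2.) Let q : ℝ → ℝ^d and φ : ℝ^d → ℝ^m be C^∞, fix t ∈ ℝ, and assume the Jacobian J = Dφ(q(t)) is nonzero. For h > 0 let z(s) = φ(q(s)), and for i ∈ {0,1,2} let v_i(h) = h^{−2}·Σ_{j=0}^{2} σ_j z(t + (j − (2−i))h) with σ = (1, −2, 1). The true diagonal Hessian block at q(t) of the discretized squared-acceleration objective Σ (1/2)‖v‖² is H(h) = (6/h⁴) · Jᵀ J + Σ_{i=0}^{2} (σ_{2−i}/h²) · D²φ(q(t))·v_i(h), and the Gauss-Newton block is H_GN(h) = (6/h⁴) · Jᵀ J. Then there exist C > 0 and h₀ > 0 such that for all h ∈ (0, h₀), ‖H(h) − H_GN(h)‖ ≤ C · h⁴ · ‖H_GN(h)‖, where ‖·‖ is the Frobenius norm; that is, the true Hessian block converges to the Gauss-Newton Hessian block in relative error at rate O(h⁴). -/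
/-!
STATEMENT 6 (Squared task-space acceleration corollary, k = 2): For smooth `q, φ` with
nonzero Jacobian `J = Dφ(q(t))`, let `z = φ ∘ q`, `σ = (1, -2, 1)`, and
`v_i(h) = h⁻² ∑_{j=0}^{2} σ_j z(t + (j - (2 - i)) h)`. With
`H(h) = (6/h⁴) JᵀJ + ∑_{i=0}^{2} (σ_{2-i}/h²) D²φ(q(t))·v_i(h)` and
`H_GN(h) = (6/h⁴) JᵀJ`, there exist `C > 0`, `h₀ > 0` with
`‖H(h) - H_GN(h)‖_F ≤ C h⁴ ‖H_GN(h)‖_F` for all `h ∈ (0, h₀)`.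
-/

open Filter Set Matrix

/-! ### Auxiliary machinery -/

/-- Flattening a matrix into a Euclidean space vector, as a linear map. -/
noncomputable def toE {d : ℕ} :
    Matrix (Fin d) (Fin d) ℝ →ₗ[ℝ] EuclideanSpace ℝ (Fin d × Fin d) where
  toFun A := WithLp.toLp 2 (fun p => A p.1 p.2)
  map_add' _ _ := rfl
  map_smul' _ _ := rfl

lemma toE_ofLp {d : ℕ} (A : Matrix (Fin d) (Fin d) ℝ) (p : Fin d × Fin d) :
    (toE A).ofLp p = A p.1 p.2 := rfl

lemma frob_eq_norm_toE {d : ℕ} (A : Matrix (Fin d) (Fin d) ℝ) : frob A = ‖toE A‖ := by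
  rw [EuclideanSpace.norm_eq]
  simp [frob, toE_ofLp, Fintype.sum_prod_type, Real.norm_eq_abs, sq_abs]

lemma d2Contract_smul {d m : ℕ} (φ : (Fin d → ℝ) → (Fin m → ℝ)) (x : Fin d → ℝ)
    (c : ℝ) (w : Fin m → ℝ) :
    d2Contract φ x (c • w) = c • d2Contract φ x w := by
  simp [d2Contract, Finset.smul_sum, smul_smul]

lemma d2Contract_add {d m : ℕ} (φ : (Fin d → ℝ) → (Fin m → ℝ)) (x : Fin d → ℝ)
    (w w' : Fin m → ℝ) :
    d2Contract φ x (w + w') = d2Contract φ x w + d2Contract φ x w' := by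
  simp [d2Contract, add_smul, Finset.sum_add_distrib]

lemma d2Contract_sub {d m : ℕ} (φ : (Fin d → ℝ) → (Fin m → ℝ)) (x : Fin d → ℝ)
    (w w' : Fin m → ℝ) :
    d2Contract φ x (w - w') = d2Contract φ x w - d2Contract φ x w' := by
  simp [d2Contract, sub_smul, Finset.sum_sub_distrib]

lemma iter_within_eq {E : Type*} [NormedAddCommGroup E] [NormedSpace ℝ E]
    {f : ℝ → E} (hf : ContDiff ℝ (⊤ : ℕ∞) f) {s : Set ℝ} (hs : UniqueDiffOn ℝ s)
    {x : ℝ} (hx : x ∈ s) (n : ℕ) :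
    iteratedDerivWithin n f s x = iteratedDeriv n f x := by
  rw [iteratedDerivWithin_eq_iteratedFDerivWithin, iteratedDeriv_eq_iteratedFDeriv]
  congr 1
  exact (((contDiff_iff_ftaylorSeries.mp (hf.of_le (by simp))).hasFTaylorSeriesUpToOn
    s).eq_iteratedFDerivWithin_of_uniqueDiffOn (by exact_mod_cast le_top) hs hx).symm

theorem squared_acceleration_hessian_relative_error_rate
    {d m : ℕ} (q : ℝ → (Fin d → ℝ)) (φ : (Fin d → ℝ) → (Fin m → ℝ))
    (hq : ContDiff ℝ (⊤ : ℕ∞) q) (hφ : ContDiff ℝ (⊤ : ℕ∞) φ)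
    (t : ℝ) (hJ : jac φ (q t) ≠ 0)
    (z : ℝ → Fin m → ℝ) (hz : z = fun s => φ (q s))
    (σ : ℕ → ℝ) (hσ0 : σ 0 = 1) (hσ1 : σ 1 = -2) (hσ2 : σ 2 = 1)
    (v : ℕ → ℝ → Fin m → ℝ)
    (hv : ∀ i h, v i h =
      (h ^ 2)⁻¹ •
        ∑ j ∈ Finset.range 3, σ j • z (t + ((j : ℝ) - ((2 : ℝ) - (i : ℝ))) * h))
    (H HGN : ℝ → Matrix (Fin d) (Fin d) ℝ)
    (hH : ∀ h, H h =
      (6 / h ^ 4) • ((jac φ (q t))ᵀ * jac φ (q t)) +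
        ∑ i ∈ Finset.range 3, (σ (2 - i) / h ^ 2) • d2Contract φ (q t) (v i h))
    (hHGN : ∀ h, HGN h = (6 / h ^ 4) • ((jac φ (q t))ᵀ * jac φ (q t))) :
    ∃ C : ℝ, 0 < C ∧ ∃ h₀ : ℝ, 0 < h₀ ∧
      ∀ h : ℝ, 0 < h → h < h₀ →
        frob (H h - HGN h) ≤ C * h ^ 4 * frob (HGN h) := by
  classical
  have hzc : ContDiff ℝ (⊤ : ℕ∞) z := by rw [hz]; exact hφ.comp hq
  set J := jac φ (q t) with hJdef
  -- the fourth-difference combination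
  set Ey : ℝ → (Fin m → ℝ) := fun h =>
    z (t - 2*h) - (4:ℝ) • z (t - h) + (6:ℝ) • z t - (4:ℝ) • z (t + h) + z (t + 2*h)
    with hEy
  -- key algebraic identity
  have key : ∀ h : ℝ, H h - HGN h = (h^4)⁻¹ • d2Contract φ (q t) (Ey h) := by
    intro h
    rw [hH h, hHGN h, add_sub_cancel_left]
    simp only [Finset.sum_range_succ, Finset.sum_range_zero, hv, hσ0, hσ1, hσ2, hEy]
    simp only [zero_add, d2Contract_smul, d2Contract_add, d2Contract_sub]
    push_cast
    ring_nf
    module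
  -- positivity of the Gauss-Newton norm
  have hJTJ : Jᵀ * J ≠ 0 := by
    intro h0
    apply hJ
    by_contra hc
    have : ∃ a p, J a p ≠ 0 := by
      by_contra hc2
      push_neg at hc2
      exact hc (by ext a p; exact hc2 a p)
    obtain ⟨a, p, hap⟩ := this
    have h1 : (Jᵀ * J) p p = ∑ j, J j p * J j p := by
      simp [Matrix.mul_apply, Matrix.transpose_apply]
    have h2 : 0 < ∑ j, J j p * J j p :=
      Finset.sum_pos' (fun i _ => mul_self_nonneg _)
        ⟨a, Finset.mem_univ a, mul_self_pos.mpr hap⟩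
    rw [h0] at h1
    simp only [Matrix.zero_apply] at h1
    exact absurd h1.symm (ne_of_gt h2)
  set B : ℝ := frob (Jᵀ * J) with hBdef
  have hB : 0 < B := by
    rw [hBdef, frob_eq_norm_toE, norm_pos_iff]
    intro h0
    apply hJTJ
    ext i j
    have := congrArg (fun x => x.ofLp (i, j)) h0
    simpa [toE_ofLp] using this
  -- bound on d2Contract
  set L : ℝ := ∑ a : Fin m, ‖toE (hess (fun y => φ y a) (q t))‖ with hLdef
  have hL0 : 0 ≤ L := Finset.sum_nonneg fun a _ => norm_nonneg _
  have hd2 : ∀ w : Fin m → ℝ, frob (d2Contract φ (q t) w) ≤ L * ‖w‖ := by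
    intro w
    rw [frob_eq_norm_toE, d2Contract, map_sum]
    refine (norm_sum_le _ _).trans ?_
    rw [hLdef, Finset.sum_mul]
    refine Finset.sum_le_sum fun a _ => ?_
    rw [_root_.map_smul, norm_smul, Real.norm_eq_abs]
    have haw : |w a| ≤ ‖w‖ := by
      simpa [Real.norm_eq_abs] using norm_le_pi_norm w a
    calc |w a| * ‖toE (hess (fun y => φ y a) (q t))‖
        ≤ ‖w‖ * ‖toE (hess (fun y => φ y a) (q t))‖ :=
          mul_le_mul_of_nonneg_right haw (norm_nonneg _)
      _ = ‖toE (hess (fun y => φ y a) (q t))‖ * ‖w‖ := mul_comm _ _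
  -- uniform bound for the fourth derivative on [t-2, t+2]
  have hz4cont : Continuous (iteratedDeriv 4 z) := hzc.continuous_iteratedDeriv 4 (WithTop.coe_le_coe.mpr le_top)
  obtain ⟨C₀, hC₀⟩ := isCompact_Icc.exists_bound_of_continuousOn
    (s := Icc (t-2) (t+2)) hz4cont.continuousOn
  have hC₀0 : 0 ≤ C₀ := le_trans (norm_nonneg _) (hC₀ t ⟨by linarith, by linarith⟩)
  -- the fourth-order Taylor estimate for the fourth difference
  have hEbound : ∀ h : ℝ, 0 < h → h < 1 → ‖Ey h‖ ≤ 4096 * C₀ * h ^ 4 := by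
    intro h h0 h1
    have hab : t - 2*h ≤ t + 2*h := by linarith
    have hab' : t - 2*h < t + 2*h := by linarith
    have hsub : Icc (t - 2*h) (t + 2*h) ⊆ Icc (t-2) (t+2) :=
      Icc_subset_Icc (by linarith) (by linarith)
    have hud : UniqueDiffOn ℝ (Icc (t - 2*h) (t + 2*h)) := uniqueDiffOn_Icc hab'
    have hcd : ContDiffOn ℝ 4 z (Icc (t - 2*h) (t + 2*h)) := (hzc.of_le (WithTop.coe_le_coe.mpr le_top)).contDiffOn
    have hbound : ∀ y ∈ Icc (t - 2*h) (t + 2*h),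
        ‖iteratedDerivWithin 4 z (Icc (t - 2*h) (t + 2*h)) y‖ ≤ C₀ := fun y hy => by
      rw [iter_within_eq hzc hud hy]; exact hC₀ y (hsub hy)
    set T : ℝ → (Fin m → ℝ) :=
      taylorWithinEval z 3 (Icc (t - 2*h) (t + 2*h)) (t - 2*h) with hT
    have h36 : ((Nat.factorial 3 : ℕ) : ℝ) = 6 := by norm_num [Nat.factorial]
    have hrem : ∀ x, x ∈ Icc (t - 2*h) (t + 2*h) →
        ‖z x - T x‖ ≤ C₀ * (4*h) ^ 4 / 6 := by
      intro x hx
      have hb := taylor_mean_remainder_bound (n := 3) hab hcd hx hbound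
      rw [h36] at hb
      refine hb.trans ?_
      gcongr
      · exact sub_nonneg.mpr hx.1
      · have := hx.2; linarith
    have hm0 : t - 2*h ∈ Icc (t - 2*h) (t + 2*h) := ⟨le_refl _, by linarith⟩
    have hm1 : t - h ∈ Icc (t - 2*h) (t + 2*h) := ⟨by linarith, by linarith⟩
    have hm2 : t ∈ Icc (t - 2*h) (t + 2*h) := ⟨by linarith, by linarith⟩
    have hm3 : t + h ∈ Icc (t - 2*h) (t + 2*h) := ⟨by linarith, by linarith⟩
    have hm4 : t + 2*h ∈ Icc (t - 2*h) (t + 2*h) := ⟨by linarith, le_refl _⟩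
    have hcancel : T (t-2*h) - (4:ℝ) • T (t - h) + (6:ℝ) • T t - (4:ℝ) • T (t+h)
        + T (t+2*h) = 0 := by
      simp only [hT, taylor_within_apply, Finset.sum_range_succ, Finset.sum_range_zero]
      match_scalars <;> ring
    have hEyrw : Ey h = (z (t-2*h) - T (t-2*h)) - (4:ℝ) • (z (t-h) - T (t-h))
        + (6:ℝ) • (z t - T t) - (4:ℝ) • (z (t+h) - T (t+h)) + (z (t+2*h) - T (t+2*h)) := by
      have step : (z (t-2*h) - T (t-2*h)) - (4:ℝ) • (z (t-h) - T (t-h))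
          + (6:ℝ) • (z t - T t) - (4:ℝ) • (z (t+h) - T (t+h)) + (z (t+2*h) - T (t+2*h))
          = Ey h - (T (t-2*h) - (4:ℝ) • T (t - h) + (6:ℝ) • T t - (4:ℝ) • T (t+h)
            + T (t+2*h)) := by
        simp only [hEy]
        module
      rw [step, hcancel, sub_zero]
    have hfive : ‖Ey h‖ ≤ ‖z (t-2*h) - T (t-2*h)‖ + 4*‖z (t-h) - T (t-h)‖
        + 6*‖z t - T t‖ + 4*‖z (t+h) - T (t+h)‖ + ‖z (t+2*h) - T (t+2*h)‖ := by
      rw [hEyrw]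
      set r0 := z (t-2*h) - T (t-2*h)
      set r1 := z (t-h) - T (t-h)
      set r2 := z t - T t
      set r3 := z (t+h) - T (t+h)
      set r4 := z (t+2*h) - T (t+2*h)
      have e1 := norm_add_le (r0 - (4:ℝ)•r1 + (6:ℝ)•r2 - (4:ℝ)•r3) r4
      have e2 := norm_sub_le (r0 - (4:ℝ)•r1 + (6:ℝ)•r2) ((4:ℝ)•r3)
      have e3 := norm_add_le (r0 - (4:ℝ)•r1) ((6:ℝ)•r2)
      have e4 := norm_sub_le r0 ((4:ℝ)•r1)
      simp only [norm_smul, Real.norm_eq_abs] at e2 e3 e4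
      norm_num at e2 e3 e4
      linarith
    have b0 := hrem _ hm0
    have b1 := hrem _ hm1
    have b2 := hrem _ hm2
    have b3 := hrem _ hm3
    have b4 := hrem _ hm4
    have hh4 : (0:ℝ) ≤ h^4 := by positivity
    nlinarith [hfive, mul_nonneg hC₀0 hh4]
  -- conclusion
  refine ⟨(L * (4096 * C₀) + 1) / (6 * B), by positivity, 1, one_pos, ?_⟩
  intro h h0 h1
  have h4 : (0:ℝ) < h^4 := by positivity
  have lhs_le : frob (H h - HGN h) ≤ L * (4096 * C₀) := by
    calc frob (H h - HGN h) = |(h^4)⁻¹| * frob (d2Contract φ (q t) (Ey h)) := by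
          rw [key h, frob_eq_norm_toE, _root_.map_smul, norm_smul, Real.norm_eq_abs,
            frob_eq_norm_toE]
      _ = (h^4)⁻¹ * frob (d2Contract φ (q t) (Ey h)) := by
          rw [abs_of_pos (by positivity)]
      _ ≤ (h^4)⁻¹ * (L * ‖Ey h‖) :=
          mul_le_mul_of_nonneg_left (hd2 _) (by positivity)
      _ ≤ (h^4)⁻¹ * (L * (4096 * C₀ * h^4)) :=
          mul_le_mul_of_nonneg_left
            (mul_le_mul_of_nonneg_left (hEbound h h0 h1) hL0) (by positivity)
      _ = L * (4096 * C₀) := by field_simp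
  have rhs_eq : (L * (4096 * C₀) + 1) / (6 * B) * h ^ 4 * frob (HGN h)
      = L * (4096 * C₀) + 1 := by
    have hfr : frob (HGN h) = (6 / h^4) * B := by
      rw [hHGN h, frob_eq_norm_toE, _root_.map_smul, norm_smul,
        Real.norm_eq_abs, ← frob_eq_norm_toE, ← hBdef,
        abs_of_pos (by positivity : (0:ℝ) < 6/h^4)]
    rw [hfr]
    field_simp
  rw [rhs_eq]
  linarith
end

section
/- (Kinetic energy as a squared velocity norm through the Rigid Body Inertial Map.) Let μ be a finite Borel measure on ℝ³ with total mass M = μ(ℝ³) > 0 and ∫‖u‖² dμ(u) < ∞, assume ∫ u_i dμ(u) = 0 for i = 1, 2, 3, and assume the Distributional Inertia Matrix is diagonal: b_{ij} = ∫ u_i u_j dμ(u) = 0 for i ≠ j, with diagonal entries b_i = ∫ u_i² dμ(u). Let x_c : ℝ → ℝ³ and e₁, e₂, e₃ : ℝ → ℝ³ be differentiable, define x(u, t) = x_c(t) + u₁e₁(t) + u₂e₂(t) + u₃e₃(t), and define the curve z : ℝ → ℝ¹² by z(t) = (√M·x_c(t); √b₁·e₁(t); √b₂·e₂(t); √b₃·e₃(t)).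 Then for every t, (1/2)·∫ ‖∂x/∂t (u, t)‖² dμ(u) = (1/2)·‖ż(t)‖². -/
/-!
Differentiating `x(u, t)` gives `ẋ_c + ∑ᵢ uᵢ ėᵢ`. Expanding its squared norm and integrating
against `μ`, the terms linear in `u` vanish because the centre of mass is at the origin, and the
mixed quadratic terms vanish because the inertia matrix is diagonal. What remains is
`M ‖ẋ_c‖² + ∑ᵢ bᵢ ‖ėᵢ‖²`, which is `‖ż‖²` for the `L²` norm on four stacked copies of `ℝ³`.
-/

open MeasureTheory RealInnerProductSpace

theorem norm_add_sum_smul_sq {ι F : Type*} [Fintype ι] [NormedAddCommGroup F]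
    [InnerProductSpace ℝ F] (v : F) (c : ι → ℝ) (w : ι → F) :
    ‖v + ∑ i, c i • w i‖ ^ 2 =
      ‖v‖ ^ 2 + ∑ i, c i * (2 * ⟪v, w i⟫) + ∑ i, ∑ j, c i * c j * ⟪w i, w j⟫ := by
  rw [norm_add_sq_real, ← real_inner_self_eq_norm_sq (∑ i, c i • w i)]
  simp only [inner_sum, sum_inner, real_inner_smul_left, real_inner_smul_right, Finset.mul_sum]
  congr 1
  · congr 1
    exact Finset.sum_congr rfl fun i _ => by ring
  · exact Finset.sum_congr rfl fun i _ => Finset.sum_congr rfl fun j _ => by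
      rw [real_inner_comm]; ring

section SecondMoments

variable {ι : Type*} [Fintype ι] {μ : Measure (EuclideanSpace ℝ ι)}

theorem memLp_two_coord (hμ : Integrable (fun u : EuclideanSpace ℝ ι => ‖u‖ ^ 2) μ) (i : ι) :
    MemLp (fun u : EuclideanSpace ℝ ι => u i) 2 μ :=
  (EuclideanSpace.proj (𝕜 := ℝ) i).comp_memLp'
    ((memLp_two_iff_integrable_sq_norm aestronglyMeasurable_id).2 hμ :)

theorem integrable_coord_mul_coord (hμ : Integrable (fun u : EuclideanSpace ℝ ι => ‖u‖ ^ 2) μ)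
    (i j : ι) : Integrable (fun u : EuclideanSpace ℝ ι => u i * u j) μ :=
  (memLp_two_coord hμ i).integrable_mul (memLp_two_coord hμ j)

theorem integrable_coord [IsFiniteMeasure μ]
    (hμ : Integrable (fun u : EuclideanSpace ℝ ι => ‖u‖ ^ 2) μ) (i : ι) :
    Integrable (fun u : EuclideanSpace ℝ ι => u i) μ :=
  (memLp_two_coord hμ i).integrable one_le_two

theorem integral_norm_add_sum_coord_smul_sq {F : Type*} [NormedAddCommGroup F]
    [InnerProductSpace ℝ F] [IsFiniteMeasure μ]
    (hμ : Integrable (fun u : EuclideanSpace ℝ ι => ‖u‖ ^ 2) μ)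
    (hcom : ∀ i, ∫ u, u i ∂μ = 0) (hdiag : ∀ i j, i ≠ j → ∫ u, u i * u j ∂μ = 0)
    (v : F) (w : ι → F) :
    ∫ u, ‖v + ∑ i, u i • w i‖ ^ 2 ∂μ =
      μ.real Set.univ * ‖v‖ ^ 2 + ∑ i, (∫ u, u i ^ 2 ∂μ) * ‖w i‖ ^ 2 := by
  classical
  have hmoment : ∀ i j, ∫ u, u i * u j ∂μ = if i = j then ∫ u, u i ^ 2 ∂μ else 0 := by
    intro i j
    split_ifs with hij
    · subst hij
      simp only [sq]
    · exact hdiag i j hij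
  have hlin : Integrable (fun u : EuclideanSpace ℝ ι => ∑ i, u i * (2 * ⟪v, w i⟫)) μ :=
    integrable_finsetSum _ fun i _ => (integrable_coord hμ i).mul_const _
  have hconst_lin :
      Integrable (fun u : EuclideanSpace ℝ ι => ‖v‖ ^ 2 + ∑ i, u i * (2 * ⟪v, w i⟫)) μ :=
    (integrable_const _).add hlin
  have hquad : ∀ i, Integrable (fun u : EuclideanSpace ℝ ι => ∑ j, u i * u j * ⟪w i, w j⟫) μ :=
    fun i => integrable_finsetSum _ fun j _ => (integrable_coord_mul_coord hμ i j).mul_const _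
  simp_rw [norm_add_sum_smul_sq]
  rw [integral_add hconst_lin (integrable_finsetSum _ fun i _ => hquad i),
    integral_add (integrable_const _) hlin, integral_const,
    integral_finsetSum _ fun i _ => (integrable_coord hμ i).mul_const _,
    integral_finsetSum _ fun i _ => hquad i]
  simp_rw [integral_finsetSum _ fun j _ => (integrable_coord_mul_coord hμ _ j).mul_const _,
    integral_mul_const, hcom, hmoment]
  simp

end SecondMoments

section WeightedStack

variable {κ E : Type*} [Fintype κ] [NormedAddCommGroup E] [NormedSpace ℝ E]

theorem PiLp.hasDerivAt_toLp_smul {p : ENNReal} [Fact (1 ≤ p)] (c : κ → ℝ) {f : κ → ℝ → E}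
    {f' : κ → E} {t : ℝ} (hf : ∀ k, HasDerivAt (f k) (f' k) t) :
    HasDerivAt (fun s => WithLp.toLp p fun k => c k • f k s)
      (WithLp.toLp p fun k => c k • f' k) t :=
  (PiLp.hasFDerivAt_toLp p _).comp_hasDerivAt t
    (hasDerivAt_pi.2 fun k => (hf k).const_smul (c k))

theorem PiLp.norm_sq_toLp_smul (c : κ → ℝ) (x : κ → E) :
    ‖WithLp.toLp 2 fun k => c k • x k‖ ^ 2 = ∑ k, c k ^ 2 * ‖x k‖ ^ 2 := by
  simp [PiLp.norm_sq_eq_of_L2, norm_smul, mul_pow]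

end WeightedStack

theorem kinetic_energy_eq_squared_velocity_of_inertial_map_general
    (μ : Measure (EuclideanSpace ℝ (Fin 3))) [IsFiniteMeasure μ]
    (hInt : Integrable (fun u : EuclideanSpace ℝ (Fin 3) => ‖u‖ ^ 2) μ)
    (hcom : ∀ i : Fin 3, ∫ u, u i ∂μ = 0)
    (hdiag : ∀ i j : Fin 3, i ≠ j → ∫ u, u i * u j ∂μ = 0)
    (xc : ℝ → EuclideanSpace ℝ (Fin 3))
    (e : Fin 3 → ℝ → EuclideanSpace ℝ (Fin 3))
    (hxc : Differentiable ℝ xc) (he : ∀ i, Differentiable ℝ (e i))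
    (z : ℝ → PiLp 2 (fun _ : Fin 4 => EuclideanSpace ℝ (Fin 3)))
    (hz : ∀ s, z s =
      (WithLp.equiv 2 (∀ _ : Fin 4, EuclideanSpace ℝ (Fin 3))).symm
        ![Real.sqrt ((μ Set.univ).toReal) • xc s,
          Real.sqrt (∫ u, u 0 ^ 2 ∂μ) • e 0 s,
          Real.sqrt (∫ u, u 1 ^ 2 ∂μ) • e 1 s,
          Real.sqrt (∫ u, u 2 ^ 2 ∂μ) • e 2 s])
    (t : ℝ) :
    (1 / 2) * ∫ u, ‖deriv (fun s => xc s + ∑ i : Fin 3, u i • e i s) t‖ ^ 2 ∂μ =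
      (1 / 2) * ‖deriv z t‖ ^ 2 := by
  -- `Fin.cons` instead of `![…]`, so that splitting off index `0` leaves the sum over the axes.
  let c : Fin 4 → ℝ := Fin.cons √(μ.real Set.univ) fun i => √(∫ u, u i ^ 2 ∂μ)
  let q : Fin 4 → ℝ → EuclideanSpace ℝ (Fin 3) := Fin.cons xc e
  have hz_cons : z = fun s => WithLp.toLp 2 fun k => c k • q k s := by
    funext s
    rw [hz]
    exact congrArg (WithLp.toLp 2) (funext fun k => by fin_cases k <;> rfl)
  have hq : ∀ k, HasDerivAt (q k) (deriv (q k) t) t :=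
    Fin.cases (hxc t).hasDerivAt fun i => (he i t).hasDerivAt
  have hx : ∀ u : EuclideanSpace ℝ (Fin 3), deriv (fun s => xc s + ∑ i, u i • e i s) t =
      deriv xc t + ∑ i, u i • deriv (e i) t := fun u =>
    ((hxc t).hasDerivAt.fun_add
      (HasDerivAt.fun_sum fun i _ => (he i t).hasDerivAt.fun_const_smul (u i))).deriv
  simp_rw [hx]
  rw [integral_norm_add_sum_coord_smul_sq hInt hcom hdiag, hz_cons,
    (PiLp.hasDerivAt_toLp_smul (p := 2) c hq).deriv, PiLp.norm_sq_toLp_smul,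
    Fin.sum_univ_succ (n := 3)]
  simp only [c, q, Fin.cons_zero, Fin.cons_succ, Real.sq_sqrt measureReal_nonneg,
    Real.sq_sqrt (integral_nonneg fun _ => sq_nonneg _)]

theorem kinetic_energy_eq_squared_velocity_of_inertial_map
    (μ : Measure (EuclideanSpace ℝ (Fin 3))) [IsFiniteMeasure μ]
    (hM : 0 < (μ Set.univ).toReal)
    (hInt : Integrable (fun u : EuclideanSpace ℝ (Fin 3) => ‖u‖ ^ 2) μ)
    (hcom : ∀ i : Fin 3, ∫ u, u i ∂μ = 0)
    (hdiag : ∀ i j : Fin 3, i ≠ j → ∫ u, u i * u j ∂μ = 0)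
    (xc : ℝ → EuclideanSpace ℝ (Fin 3))
    (e : Fin 3 → ℝ → EuclideanSpace ℝ (Fin 3))
    (hxc : Differentiable ℝ xc) (he : ∀ i, Differentiable ℝ (e i))
    (z : ℝ → PiLp 2 (fun _ : Fin 4 => EuclideanSpace ℝ (Fin 3)))
    (hz : ∀ s, z s =
      (WithLp.equiv 2 (∀ _ : Fin 4, EuclideanSpace ℝ (Fin 3))).symm
        ![Real.sqrt ((μ Set.univ).toReal) • xc s,
          Real.sqrt (∫ u, u 0 ^ 2 ∂μ) • e 0 s,
          Real.sqrt (∫ u, u 1 ^ 2 ∂μ) • e 1 s,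
          Real.sqrt (∫ u, u 2 ^ 2 ∂μ) • e 2 s])
    (t : ℝ) :
    (1 / 2) * ∫ u, ‖deriv (fun s => xc s + ∑ i : Fin 3, u i • e i s) t‖ ^ 2 ∂μ =
      (1 / 2) * ‖deriv z t‖ ^ 2 :=
  kinetic_energy_eq_squared_velocity_of_inertial_map_general μ hInt hcom hdiag xc e hxc he z hz t
end
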